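/- arXiv:2107.12015 — 3 statements merged into one kernel-verified Lean document; each statement's English description precedes it below -/
import Mathlib

section
/- Under the stated assumptions on V, the function U is continuous, strictly increasing, and a bijection of [0,∞) onto [0,∞). Moreover there exists c ≥ 1, depending only on C and D, such that for all t ≥ 0 and r ≥ 0: c⁻¹ t ≤ U(t)·V(U(t))^{1/2} ≤ c t and c⁻¹ r ≤ U(r·V(r)^{1/2}) ≤ c r; and for all t ≥ 0 and λ ≥ 1: U(λt) ≤ λ U(t) and U(λt) ≥ c⁻¹ λ^{1/(1+D/2)} U(t). -/
open MeasureTheory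

/-- The auxiliary function `U(t) = |{x ∈ ℝ : |x|·V(x)^{1/2} ≤ t}|`. -/
noncomputable def Ufun (V : ℝ → ℝ) (t : ℝ) : ℝ :=
  (volume {x : ℝ | |x| * Real.sqrt (V x) ≤ t}).toReal

open Set


/-- Bundle of hypotheses on `V`. -/
def GoodV (C D : ℝ) (V : ℝ → ℝ) : Prop :=
  Continuous V ∧ (∀ x, 0 ≤ V x) ∧ (∃ x, V x ≠ 0) ∧
  (∀ x : ℝ, C⁻¹ * V x ≤ V (-x) ∧ V (-x) ≤ C * V x) ∧
  (∀ x : ℝ, ∀ lam : ℝ, 1 ≤ lam → V x ≤ V (lam * x) ∧ V (lam * x) ≤ C * lam ^ D * V x)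

lemma GoodV.neg {C D : ℝ} {V : ℝ → ℝ} (hC : 1 ≤ C) (h : GoodV C D V) :
    GoodV C D (fun x => V (-x)) := by
  obtain ⟨hc, h0, ⟨x₀, hx₀⟩, hsym, hscale⟩ := h
  have hCpos : 0 < C := lt_of_lt_of_le one_pos hC
  refine ⟨hc.comp continuous_neg, fun x => h0 _, ⟨-x₀, ?_⟩, fun x => ?_, fun x lam hlam => ?_⟩
  · simp only [neg_neg]; exact hx₀
  · constructor
    · have := (hsym (-x)).1
      simpa [neg_neg] using this
    · have := (hsym x).1
      simp only [neg_neg]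
      calc V x ≤ C * (C⁻¹ * V x) := by field_simp; exact le_rfl
        _ ≤ C * V (-x) := by nlinarith [h0 x, h0 (-x)]
  · have h1 := (hscale (-x) lam hlam).1
    have h2 := (hscale (-x) lam hlam).2
    constructor
    · simpa [mul_comm, neg_mul, mul_neg] using h1
    · simpa [mul_comm, neg_mul, mul_neg] using h2

lemma GoodV.pos {C D : ℝ} {V : ℝ → ℝ} (hC : 1 ≤ C) (h : GoodV C D V) :
    ∀ x : ℝ, x ≠ 0 → 0 < V x := by
  obtain ⟨hc, h0, ⟨x₀, hx₀⟩, hsym, hscale⟩ := h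
  have hCpos : 0 < C := lt_of_lt_of_le one_pos hC
  have hx₀pos : 0 < V x₀ := lt_of_le_of_ne (h0 x₀) (Ne.symm hx₀)
  -- there is a positive point with positive value
  have hy : ∃ y : ℝ, 0 < y ∧ 0 < V y := by
    rcases lt_trichotomy x₀ 0 with h1 | h1 | h1
    · refine ⟨-x₀, by linarith, ?_⟩
      have := (hsym x₀).1
      nlinarith [inv_pos.2 hCpos]
    · subst h1
      have hev : ∀ᶠ y in nhds (0:ℝ), 0 < V y :=
        (hc.continuousAt (x := 0)).eventually_const_lt hx₀pos
      have hev' : ∀ᶠ y in nhdsWithin (0:ℝ) (Ioi 0), 0 < V y :=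
        nhdsWithin_le_nhds hev
      have : ∃ y ∈ Ioi (0:ℝ), 0 < V y := by
        rcases (hev'.and self_mem_nhdsWithin).exists with ⟨y, hy1, hy2⟩
        exact ⟨y, hy2, hy1⟩
      rcases this with ⟨y, hy1, hy2⟩
      exact ⟨y, hy1, hy2⟩
    · exact ⟨x₀, h1, hx₀pos⟩
  rcases hy with ⟨y, hy0, hyV⟩
  -- positive on all positive points
  have hpos : ∀ x : ℝ, 0 < x → 0 < V x := by
    intro x hx
    by_contra hcon
    have hVx : V x = 0 := le_antisymm (not_lt.1 hcon) (h0 x)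
    set lam : ℝ := max 1 (y / x) with hlam
    have hlam1 : 1 ≤ lam := le_max_left _ _
    have hlx : y ≤ lam * x := by
      have : y / x ≤ lam := le_max_right _ _
      calc y = (y / x) * x := by field_simp
        _ ≤ lam * x := by nlinarith
    have hVlx : 0 < V (lam * x) := by
      have hlxpos : 0 < lam * x := by nlinarith
      rcases eq_or_lt_of_le hlx with he | hlt
      · rwa [← he]
      · have hmu : 1 ≤ (lam * x) / y := by
          rw [le_div_iff₀ hy0]; linarith
        have := (hscale y ((lam * x) / y) hmu).1
        have heq : (lam * x) / y * y = lam * x := by field_simp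
        rw [heq] at this; linarith
    have := (hscale x lam hlam1).2
    rw [hVx] at this
    simp at this
    linarith
  intro x hx
  rcases lt_trichotomy x 0 with h1 | h1 | h1
  · have h2 := (hsym (-x)).1
    rw [neg_neg] at h2
    have : 0 < V (-x) := hpos (-x) (by linarith)
    nlinarith [inv_pos.2 hCpos]
  · exact absurd h1 hx
  · exact hpos x h1



lemma fV_strictMono {C D : ℝ} {V : ℝ → ℝ} (hC : 1 ≤ C) (h : GoodV C D V) :
    StrictMonoOn (fun r => r * Real.sqrt (V r)) (Ici (0:ℝ)) := by
  obtain ⟨hc, h0, hne, hsym, hscale⟩ := id h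
  intro r hr s hs hrs
  simp only
  rcases eq_or_lt_of_le (mem_Ici.1 hr) with he | hrpos
  · rw [← he]
    simp only [zero_mul]
    have hs0 : 0 < s := by rw [← he] at hrs; exact hrs
    have : 0 < V s := GoodV.pos hC ‹_› s (ne_of_gt hs0)
    exact mul_pos hs0 (Real.sqrt_pos.2 this)
  · have hVrs : V r ≤ V s := by
      have := (hscale r (s / r) (by rw [le_div_iff₀ hrpos]; linarith)).1
      rwa [div_mul_cancel₀ _ (ne_of_gt hrpos)] at this
    have hVs : 0 < V s := GoodV.pos hC ‹_› s (ne_of_gt (lt_trans hrpos hrs))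
    calc r * Real.sqrt (V r) ≤ r * Real.sqrt (V s) := by
          have := Real.sqrt_le_sqrt hVrs
          nlinarith [Real.sqrt_nonneg (V r)]
      _ < s * Real.sqrt (V s) := by
          have : 0 < Real.sqrt (V s) := Real.sqrt_pos.2 hVs
          nlinarith

lemma fV_scale_up {C D : ℝ} {V : ℝ → ℝ} (h : GoodV C D V) :
    ∀ r : ℝ, 0 ≤ r → ∀ lam : ℝ, 1 ≤ lam →
      lam * (r * Real.sqrt (V r)) ≤ (lam * r) * Real.sqrt (V (lam * r)) := by
  obtain ⟨hc, h0, hne, hsym, hscale⟩ := id h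
  intro r hr lam hlam
  have h1 := Real.sqrt_le_sqrt (hscale r lam hlam).1
  have hlam0 : (0:ℝ) < lam := lt_of_lt_of_le one_pos hlam
  calc lam * (r * Real.sqrt (V r)) = (lam * r) * Real.sqrt (V r) := by ring
    _ ≤ (lam * r) * Real.sqrt (V (lam * r)) :=
        mul_le_mul_of_nonneg_left h1 (by positivity)

lemma fV_scale_down {C D : ℝ} {V : ℝ → ℝ} (hC : 1 ≤ C) (hD : 0 < D) (h : GoodV C D V) :
    ∀ r : ℝ, 0 ≤ r → ∀ lam : ℝ, 1 ≤ lam →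
      (lam * r) * Real.sqrt (V (lam * r)) ≤
        Real.sqrt C * lam ^ (1 + D / 2) * (r * Real.sqrt (V r)) := by
  obtain ⟨hc, h0, hne, hsym, hscale⟩ := id h
  intro r hr lam hlam
  have hlam0 : (0:ℝ) < lam := lt_of_lt_of_le one_pos hlam
  have h1 : Real.sqrt (V (lam * r)) ≤ Real.sqrt C * lam ^ (D / 2) * Real.sqrt (V r) := by
    have h2 : Real.sqrt (V (lam * r)) ≤ Real.sqrt (C * lam ^ D * V r) :=
      Real.sqrt_le_sqrt (hscale r lam hlam).2
    have h3 : Real.sqrt (C * lam ^ D * V r)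
        = Real.sqrt C * Real.sqrt (lam ^ D) * Real.sqrt (V r) := by
      rw [Real.sqrt_mul (by positivity), Real.sqrt_mul (by linarith)]
    have h4 : Real.sqrt (lam ^ D) = lam ^ (D / 2) := by
      rw [Real.sqrt_eq_rpow, ← Real.rpow_mul (le_of_lt hlam0), mul_one_div]
    rw [h3, h4] at h2
    exact h2
  have h5 : lam ^ (1 + D / 2) = lam * lam ^ (D / 2) := by
    rw [Real.rpow_add hlam0, Real.rpow_one]
  rw [h5]
  calc (lam * r) * Real.sqrt (V (lam * r))
      ≤ (lam * r) * (Real.sqrt C * lam ^ (D / 2) * Real.sqrt (V r)) :=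
        mul_le_mul_of_nonneg_left h1 (by positivity)
    _ = Real.sqrt C * (lam * lam ^ (D / 2)) * (r * Real.sqrt (V r)) := by ring



/-- The inverse function of `r ↦ r √(V r)` on `[0,∞)`, with all its properties. -/
lemma exists_inverse {C D : ℝ} {V : ℝ → ℝ} (hC : 1 ≤ C) (hD : 0 < D) (h : GoodV C D V) :
    ∃ a : ℝ → ℝ,
      (∀ t, 0 ≤ a t) ∧
      (∀ t, 0 ≤ t → a t * Real.sqrt (V (a t)) = t) ∧
      (∀ r, 0 ≤ r → a (r * Real.sqrt (V r)) = r) ∧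
      ContinuousOn a (Ici 0) ∧
      (∀ t s, 0 ≤ t → t ≤ s → a t ≤ a s) ∧
      (∀ t s, 0 ≤ t → t < s → a t < a s) ∧
      (∀ t lam, 0 ≤ t → 1 ≤ lam → a (lam * t) ≤ lam * a t) ∧
      (∀ t lam, 0 ≤ t → 1 ≤ lam →
        (Real.sqrt C)⁻¹ * lam ^ (1 / (1 + D / 2)) * a t ≤ a (lam * t)) := by
  obtain ⟨hc, h0, hne, hsym, hscale⟩ := id h
  set f : ℝ → ℝ := fun r => r * Real.sqrt (V r) with hf
  have hfc : Continuous f := continuous_id.mul (hc.sqrt)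
  have hmono : StrictMonoOn f (Ici 0) := fV_strictMono hC h
  have hmono' : MonotoneOn f (Ici 0) := hmono.monotoneOn
  have hf0 : f 0 = 0 := by simp [hf]
  have hV1 : 0 < Real.sqrt (V 1) := Real.sqrt_pos.2 (GoodV.pos hC h 1 one_ne_zero)
  -- surjectivity
  have hsurj : ∀ t : ℝ, 0 ≤ t → ∃ r, 0 ≤ r ∧ f r = t := by
    intro t ht
    set R : ℝ := max 1 (t / Real.sqrt (V 1)) with hR
    have hR1 : 1 ≤ R := le_max_left _ _
    have hfR : t ≤ f R := by
      have hVR : V 1 ≤ V R := by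
        have := (hscale 1 R hR1).1
        rwa [mul_one] at this
      have : t / Real.sqrt (V 1) * Real.sqrt (V 1) ≤ R * Real.sqrt (V R) := by
        have h1 := Real.sqrt_le_sqrt hVR
        have h2 : t / Real.sqrt (V 1) ≤ R := le_max_right _ _
        nlinarith [Real.sqrt_nonneg (V 1)]
      rwa [div_mul_cancel₀ _ (ne_of_gt hV1)] at this
    have := intermediate_value_Icc (by linarith : (0:ℝ) ≤ R) hfc.continuousOn
    have hmem : t ∈ Icc (f 0) (f R) := by rw [hf0]; exact ⟨ht, hfR⟩
    rcases this hmem with ⟨r, hr, hfr⟩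
    exact ⟨r, hr.1, hfr⟩
  have hex : ∀ t : ℝ, ∃ r, 0 ≤ r ∧ f r = max t 0 := fun t => hsurj _ (le_max_right _ _)
  choose a ha0 haeq using hex
  have haeq' : ∀ t, 0 ≤ t → f (a t) = t := by
    intro t ht; rw [haeq t, max_eq_left ht]
  have hainv : ∀ r, 0 ≤ r → a (f r) = r := by
    intro r hr
    have hfr : 0 ≤ f r := by
      have : 0 ≤ Real.sqrt (V r) := Real.sqrt_nonneg _
      simp only [hf]; positivity
    exact hmono.injOn (ha0 _) hr (haeq' _ hfr)
  have hamono : ∀ t s, 0 ≤ t → t ≤ s → a t ≤ a s := by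
    intro t s ht hts
    by_contra hcon
    push_neg at hcon
    have := hmono (ha0 s) (ha0 t) hcon
    rw [haeq' t ht, haeq' s (le_trans ht hts)] at this
    linarith
  have hastrict : ∀ t s, 0 ≤ t → t < s → a t < a s := by
    intro t s ht hts
    rcases eq_or_lt_of_le (hamono t s ht (le_of_lt hts)) with he | h'
    · exfalso
      have : f (a t) = f (a s) := by rw [he]
      rw [haeq' t ht, haeq' s (by linarith)] at this
      linarith
    · exact h'
  -- a vanishes on nonpositives
  have haneg : ∀ t, t ≤ 0 → a t = 0 := by
    intro t ht
    have : f (a t) = 0 := by rw [haeq t, max_eq_right ht]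
    have := hmono.injOn (ha0 t) (self_mem_Ici) (by rw [this, hf0])
    exact this
  have hamono' : Monotone a := by
    intro t s hts
    rcases le_or_gt t 0 with h1 | h1
    · rw [haneg t h1]; exact ha0 s
    · exact hamono t s (le_of_lt h1) hts
  -- continuity
  have hacont : ContinuousOn a (Ici 0) := by
    intro t ht
    rcases eq_or_lt_of_le (mem_Ici.1 ht) with he | htpos
    · -- t = 0
      subst he
      have := continuousWithinAt_right_of_monotoneOn_of_exists_between
        (f := a) (s := Ici (0:ℝ)) (a := 0)
        (hamono'.monotoneOn _) self_mem_nhdsWithin ?_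
      · exact this
      · intro b hb
        rw [haneg 0 le_rfl] at hb ⊢
        refine ⟨f (b / 2), ?_, ?_⟩
        · have : 0 ≤ f (b/2) := by
            have : 0 ≤ Real.sqrt (V (b/2)) := Real.sqrt_nonneg _
            simp only [hf]; positivity
          exact this
        · rw [hainv (b/2) (by linarith)]
          constructor <;> linarith
    · -- t > 0
      have hat : 0 < a t := by
        have := hastrict 0 t le_rfl htpos
        rw [haneg 0 le_rfl] at this
        exact this
      have himg : a '' univ ∈ nhds (a t) := by
        have hsub : Ioo (a t / 2) (a t + a t) ⊆ a '' univ := by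
          intro y hy
          have hy0 : 0 ≤ y := by have := hy.1; linarith
          exact ⟨f y, mem_univ _, hainv y hy0⟩
        exact Filter.mem_of_superset (Ioo_mem_nhds (by linarith) (by linarith)) hsub
      have := continuousAt_of_monotoneOn_of_image_mem_nhds
        (f := a) (s := univ) (a := t) (hamono'.monotoneOn _) Filter.univ_mem himg
      exact this.continuousWithinAt
  have haeq2 : ∀ t, 0 ≤ t → a t * Real.sqrt (V (a t)) = t := haeq'
  have hfnn : ∀ r, 0 ≤ r → 0 ≤ f r := by
    intro r hr
    have : 0 ≤ Real.sqrt (V r) := Real.sqrt_nonneg _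
    simp only [hf]; positivity
  have hK1 : 1 ≤ Real.sqrt C := by
    have := Real.sqrt_le_sqrt hC
    rwa [Real.sqrt_one] at this
  have hKpos : 0 < Real.sqrt C := lt_of_lt_of_le one_pos hK1
  set K := Real.sqrt C with hKdef
  set q : ℝ := 1 / (1 + D / 2) with hqdef
  have hqpos : 0 < q := by rw [hqdef]; positivity
  have hq1 : q ≤ 1 := by
    rw [hqdef]
    rw [div_le_one (by linarith)]
    linarith
  have hqmul : q * (1 + D / 2) = 1 := by
    rw [hqdef]; field_simp
  -- scaling up
  have hup : ∀ t lam, 0 ≤ t → 1 ≤ lam → a (lam * t) ≤ lam * a t := by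
    intro t lam ht hlam
    have hlam0 : (0:ℝ) < lam := lt_of_lt_of_le one_pos hlam
    have h1 : lam * t ≤ f (lam * a t) := by
      have h2 := fV_scale_up h (a t) (ha0 t) lam hlam
      calc lam * t = lam * (a t * Real.sqrt (V (a t))) := by rw [haeq2 t ht]
        _ ≤ (lam * a t) * Real.sqrt (V (lam * a t)) := h2
        _ = f (lam * a t) := rfl
    have h3 : a (lam * t) ≤ a (f (lam * a t)) :=
      hamono (lam * t) _ (mul_nonneg (by linarith) ht) h1
    rwa [hainv (lam * a t) (mul_nonneg (by linarith) (ha0 t))] at h3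
  -- scaling down
  have hdown : ∀ t lam, 0 ≤ t → 1 ≤ lam → K⁻¹ * lam ^ q * a t ≤ a (lam * t) := by
    intro t lam ht hlam
    have hlam0 : (0:ℝ) < lam := lt_of_lt_of_le one_pos hlam
    have hlamq1 : 1 ≤ lam ^ q := by
      have := Real.rpow_le_rpow_of_exponent_le hlam (le_of_lt hqpos)
      rwa [Real.rpow_zero] at this
    have hlamq_le : lam ^ q ≤ lam := by
      have := Real.rpow_le_rpow_of_exponent_le hlam hq1
      rwa [Real.rpow_one] at this
    rcases le_or_gt lam K with hcase | hcase
    · -- easy case : lam ≤ K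
      have h1 : a t ≤ a (lam * t) := hamono t (lam * t) ht (by nlinarith)
      have h2 : K⁻¹ * lam ^ q ≤ 1 := by
        rw [← inv_mul_cancel₀ (ne_of_gt hKpos)]
        have : lam ^ q ≤ K := le_trans hlamq_le hcase
        nlinarith [inv_pos.2 hKpos]
      nlinarith [ha0 t, mul_le_of_le_one_left (ha0 t) h2]
    · -- main case : K < lam
      set mu : ℝ := lam / K with hmu
      have hmu1 : 1 ≤ mu := by
        rw [hmu, le_div_iff₀ hKpos]; linarith
      have hmuq1 : 1 ≤ mu ^ q := by
        have := Real.rpow_le_rpow_of_exponent_le hmu1 (le_of_lt hqpos)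
        rwa [Real.rpow_zero] at this
      have hmupos : (0:ℝ) < mu := div_pos hlam0 hKpos
      have hmuqnn : (0:ℝ) ≤ mu ^ q := le_trans zero_le_one hmuq1
      have hstep : f (mu ^ q * a t) ≤ lam * t := by
        have h2 := fV_scale_down hC hD h (a t) (ha0 t) (mu ^ q) hmuq1
        have h3 : (mu ^ q) ^ (1 + D / 2) = mu := by
          rw [← Real.rpow_mul (le_of_lt hmupos), hqmul, Real.rpow_one]
        rw [h3, haeq2 t ht] at h2
        have hKmu : Real.sqrt C * mu = lam := by
          rw [hmu, hKdef]
          field_simp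
        calc f (mu ^ q * a t) = mu ^ q * a t * Real.sqrt (V (mu ^ q * a t)) := rfl
          _ ≤ Real.sqrt C * mu * t := h2
          _ = lam * t := by rw [hKmu]
      have h4 : a (f (mu ^ q * a t)) ≤ a (lam * t) :=
        hamono _ _ (hfnn _ (mul_nonneg hmuqnn (ha0 t))) hstep
      rw [hainv (mu ^ q * a t) (mul_nonneg hmuqnn (ha0 t))] at h4
      have h5 : K⁻¹ * lam ^ q ≤ mu ^ q := by
        have hdiv : mu ^ q = lam ^ q / K ^ q := by
          rw [hmu, Real.div_rpow (le_of_lt hlam0) (le_of_lt hKpos)]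
        have hKq : K ^ q ≤ K := by
          have := Real.rpow_le_rpow_of_exponent_le hK1 hq1
          rwa [Real.rpow_one] at this
        have hKqpos : 0 < K ^ q := Real.rpow_pos_of_pos hKpos q
        rw [hdiv, div_eq_inv_mul]
        have : K⁻¹ ≤ (K ^ q)⁻¹ := by
          apply inv_anti₀ hKqpos hKq
        have hlq : 0 ≤ lam ^ q := by positivity
        nlinarith
      nlinarith [ha0 t]
  exact ⟨a, ha0, haeq2, hainv, hacont, hamono, hastrict, hup, hdown⟩




/-- Under the stated assumptions on `V`, the function `U` is continuous, strictly increasing and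
a bijection of `[0,∞)` onto `[0,∞)`; moreover there is `c ≥ 1`, depending only on `C` and `D`,
such that `c⁻¹t ≤ U(t)·V(U(t))^{1/2} ≤ ct`, `c⁻¹r ≤ U(r·V(r)^{1/2}) ≤ cr`, and for `λ ≥ 1`,
`U(λt) ≤ λU(t)` and `U(λt) ≥ c⁻¹λ^{1/(1+D/2)}U(t)`. -/
theorem Ufun_properties (C D : ℝ) (hC : 1 ≤ C) (hD : 0 < D) :
    ∃ c : ℝ, 1 ≤ c ∧
      ∀ V : ℝ → ℝ, Continuous V → (∀ x, 0 ≤ V x) → (∃ x, V x ≠ 0) →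
        (∀ x : ℝ, C⁻¹ * V x ≤ V (-x) ∧ V (-x) ≤ C * V x) →
        (∀ x : ℝ, ∀ lam : ℝ, 1 ≤ lam → V x ≤ V (lam * x) ∧ V (lam * x) ≤ C * lam ^ D * V x) →
        ContinuousOn (Ufun V) (Set.Ici 0) ∧
        StrictMonoOn (Ufun V) (Set.Ici 0) ∧
        Set.BijOn (Ufun V) (Set.Ici 0) (Set.Ici 0) ∧
        (∀ t : ℝ, 0 ≤ t →
          c⁻¹ * t ≤ Ufun V t * Real.sqrt (V (Ufun V t)) ∧
            Ufun V t * Real.sqrt (V (Ufun V t)) ≤ c * t) ∧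
        (∀ r : ℝ, 0 ≤ r →
          c⁻¹ * r ≤ Ufun V (r * Real.sqrt (V r)) ∧ Ufun V (r * Real.sqrt (V r)) ≤ c * r) ∧
        (∀ t : ℝ, 0 ≤ t → ∀ lam : ℝ, 1 ≤ lam →
          Ufun V (lam * t) ≤ lam * Ufun V t ∧
            c⁻¹ * lam ^ (1 / (1 + D / 2)) * Ufun V t ≤ Ufun V (lam * t)) := by
  have hK1 : 1 ≤ Real.sqrt C := by
    have := Real.sqrt_le_sqrt hC
    rwa [Real.sqrt_one] at this
  set K := Real.sqrt C with hKdef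
  have hKpos : 0 < K := lt_of_lt_of_le one_pos hK1
  have hbase : (1:ℝ) ≤ 1 + K := by linarith
  have hpow1 : (1:ℝ) + K ≤ (1 + K) ^ (1 + D / 2) := by
    have := Real.rpow_le_rpow_of_exponent_le hbase (by linarith : (1:ℝ) ≤ 1 + D / 2)
    rwa [Real.rpow_one] at this
  have hpowge1 : (1:ℝ) ≤ (1 + K) ^ (1 + D / 2) := by linarith
  set c : ℝ := K * (1 + K) ^ (1 + D / 2) with hcdef
  have hc1 : 1 ≤ c := by nlinarith
  have hcpos : 0 < c := lt_of_lt_of_le one_pos hc1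
  have hcK : K ≤ c := by nlinarith
  have hc1K : 1 + K ≤ c := by nlinarith
  have hcinv1 : c⁻¹ ≤ 1 := by
    rw [inv_le_one_iff₀]; right; exact hc1
  refine ⟨c, hc1, ?_⟩
  intro V hVc hV0 hVne hsym hscale
  have hg : GoodV C D V := ⟨hVc, hV0, hVne, hsym, hscale⟩
  have hgW : GoodV C D (fun x => V (-x)) := hg.neg hC
  obtain ⟨a, ha0, haeq, hainv, hacont, hamono, hastrict, haup, hadown⟩ :=
    exists_inverse hC hD hg
  obtain ⟨b, hb0, hbeq0, hbinv0, hbcont, hbmono, hbstrict, hbup, hbdown⟩ :=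
    exists_inverse hC hD hgW
  have hbeq : ∀ t, 0 ≤ t → b t * Real.sqrt (V (-(b t))) = t := hbeq0
  have hbinv : ∀ r, 0 ≤ r → b (r * Real.sqrt (V (-r))) = r := hbinv0
  have hVmono : StrictMonoOn (fun r => r * Real.sqrt (V r)) (Ici (0:ℝ)) := fV_strictMono hC hg
  have hWmono : StrictMonoOn (fun r => r * Real.sqrt (V (-r))) (Ici (0:ℝ)) := fV_strictMono hC hgW
  -- the sublevel set is an interval
  have hset : ∀ t, 0 ≤ t → {x : ℝ | |x| * Real.sqrt (V x) ≤ t} = Icc (-(b t)) (a t) := by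
    intro t ht
    ext x
    simp only [mem_setOf_eq, mem_Icc]
    constructor
    · intro hx
      constructor
      · rcases le_or_gt 0 x with h1 | h1
        · linarith [hb0 t]
        · by_contra hcon
          push_neg at hcon
          have hbx : b t < -x := by linarith
          have h2 := hWmono (mem_Ici.2 (hb0 t)) (mem_Ici.2 (by linarith : (0:ℝ) ≤ -x)) hbx
          simp only at h2
          rw [hbeq t ht, neg_neg] at h2
          rw [abs_of_neg h1] at hx
          linarith
      · rcases le_or_gt 0 x with h1 | h1
        · by_contra hcon
          push_neg at hcon
          have h2 := hVmono (mem_Ici.2 (ha0 t)) (mem_Ici.2 h1) hcon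
          simp only at h2
          rw [haeq t ht] at h2
          rw [abs_of_nonneg h1] at hx
          linarith
        · linarith [ha0 t]
    · rintro ⟨hx1, hx2⟩
      rcases le_or_gt 0 x with h1 | h1
      · rw [abs_of_nonneg h1]
        have h2 := hVmono.monotoneOn (mem_Ici.2 h1) (mem_Ici.2 (ha0 t)) hx2
        rwa [haeq t ht] at h2
      · rw [abs_of_neg h1]
        have hxb : -x ≤ b t := by linarith
        have h2 := hWmono.monotoneOn (mem_Ici.2 (by linarith : (0:ℝ) ≤ -x)) (mem_Ici.2 (hb0 t)) hxb
        simp only [neg_neg] at h2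
        rw [hbeq t ht] at h2
        exact h2
  have hUeq : ∀ t, 0 ≤ t → Ufun V t = a t + b t := by
    intro t ht
    rw [Ufun, hset t ht, Real.volume_Icc]
    rw [ENNReal.toReal_ofReal (by linarith [ha0 t, hb0 t] : (0:ℝ) ≤ a t - -(b t))]
    ring
  -- comparison between a and b
  have hba : ∀ t, 0 ≤ t → b t ≤ K * a t := by
    intro t ht
    have h1 : b t * Real.sqrt (V (b t)) ≤ K * t := by
      have hVle : V (b t) ≤ C * V (-(b t)) := by
        have h2 := (hsym (b t)).1
        have hCpos : 0 < C := lt_of_lt_of_le one_pos hC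
        calc V (b t) = C * (C⁻¹ * V (b t)) := by field_simp
          _ ≤ C * V (-(b t)) := mul_le_mul_of_nonneg_left h2 (le_of_lt hCpos)
      have h3 : Real.sqrt (V (b t)) ≤ K * Real.sqrt (V (-(b t))) := by
        have := Real.sqrt_le_sqrt hVle
        rwa [Real.sqrt_mul (by linarith : (0:ℝ) ≤ C), ← hKdef] at this
      calc b t * Real.sqrt (V (b t)) ≤ b t * (K * Real.sqrt (V (-(b t)))) :=
            mul_le_mul_of_nonneg_left h3 (hb0 t)
        _ = K * (b t * Real.sqrt (V (-(b t)))) := by ring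
        _ = K * t := by rw [hbeq t ht]
    have h4 : a (b t * Real.sqrt (V (b t))) ≤ a (K * t) :=
      hamono _ _ (mul_nonneg (hb0 t) (Real.sqrt_nonneg _)) h1
    rw [hainv (b t) (hb0 t)] at h4
    exact le_trans h4 (haup t K ht hK1)
  -- continuity
  have hUcont : ContinuousOn (Ufun V) (Ici 0) :=
    (hacont.add hbcont).congr hUeq
  -- strict monotonicity
  have hUmono : StrictMonoOn (Ufun V) (Ici 0) := by
    intro t ht s hs hts
    rw [hUeq t ht, hUeq s hs]
    exact add_lt_add_of_lt_of_le (hastrict t s ht hts) (hbmono t s ht hts.le)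
  have hU0 : Ufun V 0 = 0 := by
    have ha00 : a 0 = 0 := by
      have := hainv 0 le_rfl
      simpa using this
    have hb00 : b 0 = 0 := by
      have := hbinv 0 le_rfl
      simpa using this
    rw [hUeq 0 le_rfl, ha00, hb00, add_zero]
  refine ⟨hUcont, hUmono, ⟨?_, hUmono.injOn, ?_⟩, ?_, ?_, ?_⟩
  · -- maps to
    intro t ht
    rw [mem_Ici, hUeq t (mem_Ici.1 ht)]
    exact add_nonneg (ha0 t) (hb0 t)
  · -- surjectivity
    intro y hy
    rw [mem_Ici] at hy
    set T : ℝ := y * Real.sqrt (V y) with hT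
    have hT0 : 0 ≤ T := mul_nonneg hy (Real.sqrt_nonneg _)
    have hUT : y ≤ Ufun V T := by
      rw [hUeq T hT0, hainv y hy]
      linarith [hb0 T]
    have hIVT := intermediate_value_Icc hT0 (hUcont.mono Icc_subset_Ici_self)
    have hmem : y ∈ Icc (Ufun V 0) (Ufun V T) := by
      rw [hU0]; exact ⟨hy, hUT⟩
    rcases hIVT hmem with ⟨s, hs, hsy⟩
    exact ⟨s, hs.1, hsy⟩
  · -- main two-sided bound
    intro t ht
    have hu : Ufun V t = a t + b t := hUeq t ht
    rw [hu]
    constructor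
    · have h1 := hVmono.monotoneOn (mem_Ici.2 (ha0 t))
        (mem_Ici.2 (by linarith [ha0 t, hb0 t] : (0:ℝ) ≤ a t + b t))
        (by linarith [hb0 t])
      rw [haeq t ht] at h1
      nlinarith [inv_pos.2 hcpos]
    · have h2 : a t + b t ≤ (1 + K) * a t := by nlinarith [hba t ht]
      have h3 := hVmono.monotoneOn
        (mem_Ici.2 (by linarith [ha0 t, hb0 t] : (0:ℝ) ≤ a t + b t))
        (mem_Ici.2 (by nlinarith [ha0 t] : (0:ℝ) ≤ (1 + K) * a t)) h2
      have h4 := fV_scale_down hC hD hg (a t) (ha0 t) (1 + K) hbase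
      rw [haeq t ht] at h4
      calc (a t + b t) * Real.sqrt (V (a t + b t))
          ≤ ((1 + K) * a t) * Real.sqrt (V ((1 + K) * a t)) := h3
        _ ≤ K * (1 + K) ^ (1 + D / 2) * t := h4
        _ = c * t := by rw [hcdef]
  · -- bound for U(r √(V r))
    intro r hr
    set T : ℝ := r * Real.sqrt (V r) with hT
    have hT0 : 0 ≤ T := mul_nonneg hr (Real.sqrt_nonneg _)
    rw [hUeq T hT0, hainv r hr]
    have hbT : b T ≤ K * r := by
      have := hba T hT0
      rwa [hainv r hr] at this
    constructor
    · nlinarith [hb0 T, inv_pos.2 hcpos]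
    · nlinarith [hb0 T]
  · -- scaling bounds
    intro t ht lam hlam
    have hlt0 : 0 ≤ lam * t := mul_nonneg (by linarith) ht
    rw [hUeq (lam * t) hlt0, hUeq t ht]
    constructor
    · have := haup t lam ht hlam
      have := hbup t lam ht hlam
      linarith [haup t lam ht hlam, hbup t lam ht hlam]
    · have hlq : (0:ℝ) ≤ lam ^ (1 / (1 + D / 2)) :=
        Real.rpow_nonneg (by linarith) _
      have hinv : c⁻¹ ≤ K⁻¹ := inv_anti₀ hKpos hcK
      calc c⁻¹ * lam ^ (1 / (1 + D / 2)) * (a t + b t)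
          ≤ K⁻¹ * lam ^ (1 / (1 + D / 2)) * (a t + b t) := by
            have hs : (0:ℝ) ≤ a t + b t := by linarith [ha0 t, hb0 t]
            exact mul_le_mul_of_nonneg_right (mul_le_mul_of_nonneg_right hinv hlq) hs
        _ = K⁻¹ * lam ^ (1 / (1 + D / 2)) * a t + K⁻¹ * lam ^ (1 / (1 + D / 2)) * b t := by ring
        _ ≤ a (lam * t) + b (lam * t) :=
            add_le_add (hadown t lam ht hlam) (hbdown t lam ht hlam)
end

section
/- For every β ∈ [0,1) and every α > 1 + (1 + D/2)(1 − β) there exists C′ > 0, depending only on C, D, α, β, such that for all r > 0 and all z′ = (x′,y′) ∈ ℝ²: ∫_{ℝ²} (1 + dist_*(z,z′)/r)^{−α} (1 + ϖ_r(z,z′))^{−β} dz ≤ C′ · r² · max{V(r),V(x′)}^{1/2}. -/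
open MeasureTheory
open ENNReal

/-- `dist_*(z,z′) = |x−x′| + min{ |y−y′|/max{V(x),V(x′)}^{1/2}, U(|y−y′|) }`, with the
convention that the quotient is `+∞` (so the `min` is `U(|y−y′|)`) when `y ≠ y′` and
`V(x) = V(x′) = 0`, and is `0` when `y = y′`. -/
noncomputable def distStar (V : ℝ → ℝ) (z z' : ℝ × ℝ) : ℝ :=
  |z.1 - z'.1| +
    (if max (V z.1) (V z'.1) = 0 then
      (if z.2 = z'.2 then 0 else Ufun V |z.2 - z'.2|)
    else
      min (|z.2 - z'.2| / Real.sqrt (max (V z.1) (V z'.1))) (Ufun V |z.2 - z'.2|))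

/-- The weight `ϖ_r(z,z′) = |y−y′| / ( r·max{V(r),V(x′)}^{1/2} )`. -/
noncomputable def grushinWeight (V : ℝ → ℝ) (r : ℝ) (z z' : ℝ × ℝ) : ℝ :=
  |z.2 - z'.2| / (r * Real.sqrt (max (V r) (V z'.1)))


section AuxV

variable {C D : ℝ} {V : ℝ → ℝ}

lemma aux_mono (hs : ∀ x : ℝ, ∀ lam : ℝ, 1 ≤ lam → V x ≤ V (lam * x) ∧ V (lam * x) ≤ C * lam ^ D * V x)
    {a b : ℝ} (ha : 0 < a) (hab : a ≤ b) : V a ≤ V b := by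
  have h1 : (1 : ℝ) ≤ b / a := (one_le_div ha).2 hab
  have := (hs a (b / a) h1).1
  rwa [div_mul_cancel₀ b ha.ne'] at this

lemma aux_V0 (hcont : Continuous V)
    (hs : ∀ x : ℝ, ∀ lam : ℝ, 1 ≤ lam → V x ≤ V (lam * x) ∧ V (lam * x) ≤ C * lam ^ D * V x)
    {b : ℝ} (hb : 0 < b) : V 0 ≤ V b := by
  have ht : Filter.Tendsto V (nhdsWithin 0 (Set.Ioi 0)) (nhds (V 0)) :=
    (hcont.tendsto 0).mono_left nhdsWithin_le_nhds
  refine le_of_tendsto ht ?_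
  filter_upwards [Ioc_mem_nhdsGT hb] with t ht'
  exact aux_mono hs ht'.1 ht'.2

lemma aux_L1 (hC : 1 ≤ C) (hcont : Continuous V) (hnn : ∀ x, 0 ≤ V x)
    (hsym : ∀ x : ℝ, C⁻¹ * V x ≤ V (-x) ∧ V (-x) ≤ C * V x)
    (hs : ∀ x : ℝ, ∀ lam : ℝ, 1 ≤ lam → V x ≤ V (lam * x) ∧ V (lam * x) ≤ C * lam ^ D * V x)
    {a b : ℝ} (hb : 0 < b) (hab : |a| ≤ b) : V a ≤ C * V b := by
  have hC0 : (0 : ℝ) < C := lt_of_lt_of_le one_pos hC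
  rcases lt_trichotomy a 0 with h | h | h
  · -- a < 0 : V a ≤ C * V (-a) ≤ C * V b
    have h1 : C⁻¹ * V a ≤ V (-a) := (hsym a).1
    have h2 : V a ≤ C * V (-a) := by
      have := mul_le_mul_of_nonneg_left h1 hC0.le
      rwa [← mul_assoc, mul_inv_cancel₀ hC0.ne', one_mul] at this
    have h3 : V (-a) ≤ V b := aux_mono hs (by linarith) (by rwa [abs_of_neg h] at hab)
    calc V a ≤ C * V (-a) := h2
      _ ≤ C * V b := by nlinarith
  · subst h
    calc V 0 ≤ V b := aux_V0 hcont hs hb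
      _ ≤ C * V b := le_mul_of_one_le_left (hnn b) hC
  · calc V a ≤ V b := aux_mono hs h (by rwa [abs_of_pos h] at hab)
      _ ≤ C * V b := le_mul_of_one_le_left (hnn b) hC

lemma aux_L1' (hC : 1 ≤ C) (hcont : Continuous V) (hnn : ∀ x, 0 ≤ V x)
    (hsym : ∀ x : ℝ, C⁻¹ * V x ≤ V (-x) ∧ V (-x) ≤ C * V x)
    (hs : ∀ x : ℝ, ∀ lam : ℝ, 1 ≤ lam → V x ≤ V (lam * x) ∧ V (lam * x) ≤ C * lam ^ D * V x)
    {a b : ℝ} (hb : b ≠ 0) (hab : |a| ≤ |b|) : V a ≤ C * C * V b := by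
  have hC0 : (0 : ℝ) < C := lt_of_lt_of_le one_pos hC
  rcases hb.lt_or_gt with h | h
  · have h1 : V a ≤ C * V (-b) := by
      have : |a| ≤ -b := by rwa [abs_of_neg h] at hab
      exact aux_L1 hC hcont hnn hsym hs (by linarith) this
    have h2 : V (-b) ≤ C * V b := (hsym b).2
    calc V a ≤ C * V (-b) := h1
      _ ≤ C * (C * V b) := by nlinarith
      _ = C * C * V b := by ring
  · have h1 : V a ≤ C * V b := aux_L1 hC hcont hnn hsym hs h (by rwa [abs_of_pos h] at hab)
    calc V a ≤ C * V b := h1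
      _ ≤ C * C * V b := by nlinarith [mul_nonneg hC0.le (hnn b)]

lemma aux_L2' (hC : 1 ≤ C) (hD : 0 < D) (hcont : Continuous V) (hnn : ∀ x, 0 ≤ V x)
    (hsym : ∀ x : ℝ, C⁻¹ * V x ≤ V (-x) ∧ V (-x) ≤ C * V x)
    (hs : ∀ x : ℝ, ∀ lam : ℝ, 1 ≤ lam → V x ≤ V (lam * x) ∧ V (lam * x) ≤ C * lam ^ D * V x)
    {a b : ℝ} (hb : b ≠ 0) :
    V a ≤ C * C * C * (max 1 (|a| / |b|)) ^ D * V b := by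
  have hC0 : (0 : ℝ) < C := lt_of_lt_of_le one_pos hC
  have hmax1 : (1 : ℝ) ≤ max 1 (|a| / |b|) := le_max_left _ _
  have hmaxD : (1 : ℝ) ≤ (max 1 (|a| / |b|)) ^ D := by
    have := Real.rpow_le_rpow (by norm_num) hmax1 hD.le
    rwa [Real.one_rpow] at this
  rcases le_or_gt |a| |b| with hab | hab
  · have h1 : V a ≤ C * C * V b := aux_L1' hC hcont hnn hsym hs hb hab
    have h3 : (1:ℝ) ≤ C * (max 1 (|a| / |b|)) ^ D := by
      calc (1:ℝ) = 1 * 1 := by norm_num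
        _ ≤ C * (max 1 (|a| / |b|)) ^ D :=
          mul_le_mul hC hmaxD (by norm_num) hC0.le
    have h4 := mul_le_mul_of_nonneg_left h3
      (mul_nonneg (mul_nonneg hC0.le hC0.le) (hnn b))
    have h2 : C * C * V b ≤ C * C * C * (max 1 (|a| / |b|)) ^ D * V b := by
      nlinarith [h4]
    linarith
  · -- |b| < |a|
    have hb0 : 0 < |b| := abs_pos.2 hb
    have ha0 : 0 < |a| := lt_trans hb0 hab
    set lam : ℝ := |a| / |b| with hlam
    have hlam1 : 1 < lam := (one_lt_div hb0).2 hab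
    set b' : ℝ := |b| / |a| * a with hb'
    have hb'abs : |b'| = |b| := by
      rw [hb', abs_mul, abs_div, abs_abs, abs_abs, div_mul_cancel₀ _ ha0.ne']
    have hlb : lam * b' = a := by
      rw [hb', hlam]; field_simp
    have h1 : V (lam * b') ≤ C * lam ^ D * V b' := (hs b' lam hlam1.le).2
    rw [hlb] at h1
    have h2 : V b' ≤ C * C * V b := aux_L1' hC hcont hnn hsym hs hb (le_of_eq hb'abs)
    have hmaxeq : max 1 lam = lam := max_eq_right hlam1.le
    have hlamD : (0:ℝ) ≤ lam ^ D := Real.rpow_nonneg (by positivity) D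
    calc V a ≤ C * lam ^ D * V b' := h1
      _ ≤ C * lam ^ D * (C * C * V b) := by
          apply mul_le_mul_of_nonneg_left h2 (by positivity)
      _ = C * C * C * lam ^ D * V b := by ring
      _ = C * C * C * (max 1 (|a| / |b|)) ^ D * V b := by rw [hmaxeq]

lemma aux_pos (hC : 1 ≤ C) (hD : 0 < D) (hcont : Continuous V) (hnn : ∀ x, 0 ≤ V x)
    (hne : ∃ x, V x ≠ 0)
    (hsym : ∀ x : ℝ, C⁻¹ * V x ≤ V (-x) ∧ V (-x) ≤ C * V x)
    (hs : ∀ x : ℝ, ∀ lam : ℝ, 1 ≤ lam → V x ≤ V (lam * x) ∧ V (lam * x) ≤ C * lam ^ D * V x)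
    {x : ℝ} (hx : x ≠ 0) : 0 < V x := by
  obtain ⟨x₀, hx₀⟩ := hne
  have hx₀pos : 0 < V x₀ := lt_of_le_of_ne (hnn x₀) (Ne.symm hx₀)
  have h := aux_L2' hC hD hcont hnn hsym hs (a := x₀) hx
  rcases (hnn x).lt_or_eq with h' | h'
  · exact h'
  · exfalso; rw [← h'] at h; simp only [mul_zero] at h; linarith

end AuxV

section AuxW
variable {C D : ℝ} {V : ℝ → ℝ}

lemma sqrt_rpow_half {x : ℝ} (hx : 0 ≤ x) (d : ℝ) :
    Real.sqrt (x ^ d) = x ^ (d / 2) := by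
  rw [Real.sqrt_eq_rpow, ← Real.rpow_mul hx]
  congr 1; ring

lemma aux_W_sq (hC : 1 ≤ C) (hD : 0 < D) (hcont : Continuous V) (hnn : ∀ x, 0 ≤ V x)
    (hsym : ∀ x : ℝ, C⁻¹ * V x ≤ V (-x) ∧ V (-x) ≤ C * V x)
    (hs : ∀ x : ℝ, ∀ lam : ℝ, 1 ≤ lam → V x ≤ V (lam * x) ∧ V (lam * x) ≤ C * lam ^ D * V x)
    {r : ℝ} (hr : 0 < r) (x x' : ℝ) :
    max (V x) (V x') ≤
      (C * C * C * 2 ^ D) * (1 + |x - x'| / r) ^ D * max (V r) (V x') := by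
  have hC0 : (0 : ℝ) < C := lt_of_lt_of_le one_pos hC
  set σ : ℝ := |x - x'| / r with hσdef
  have hσ0 : 0 ≤ σ := by positivity
  have h1σ : (1 : ℝ) ≤ 1 + σ := by linarith
  have h2D1 : (1 : ℝ) ≤ 2 ^ D := by
    have := Real.rpow_le_rpow (by norm_num) (by norm_num : (1:ℝ) ≤ 2) hD.le
    rwa [Real.one_rpow] at this
  have hBD : (1 : ℝ) ≤ (1 + σ) ^ D := by
    have := Real.rpow_le_rpow (by norm_num) h1σ hD.le
    rwa [Real.one_rpow] at this
  have hcoef1 : (1 : ℝ) ≤ C * C * C * 2 ^ D * (1 + σ) ^ D := by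
    have h3 : (1:ℝ) ≤ C * C * C := by nlinarith
    have h4 : (1:ℝ) ≤ C * C * C * 2 ^ D :=
      le_trans h3 (le_mul_of_one_le_right (by positivity) h2D1)
    exact le_trans h4 (le_mul_of_one_le_right (by positivity) hBD)
  have hmaxnn : 0 ≤ max (V r) (V x') := le_trans (hnn r) (le_max_left _ _)
  -- bound for V x
  have hVx : V x ≤ C * C * C * 2 ^ D * (1 + σ) ^ D * max (V r) (V x') := by
    rcases le_or_gt |x'| r with hx'r | hx'r
    · -- use base point r
      have h2 := aux_L2' hC hD hcont hnn hsym hs (a := x) (b := r) hr.ne'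
      rw [abs_of_pos hr] at h2
      have hm : max 1 (|x| / r) ≤ 2 * (1 + σ) := by
        have hxb : |x| ≤ r + |x - x'| := by
          have := abs_sub_abs_le_abs_sub x x'
          linarith
        have hσr : σ * r = |x - x'| := by
          rw [hσdef]; field_simp
        have hdiv : |x| / r ≤ 1 + σ := by
          rw [div_le_iff₀ hr]
          nlinarith
        refine max_le (by linarith) (by linarith)
      have hmD : (max 1 (|x| / r)) ^ D ≤ (2 * (1 + σ)) ^ D :=
        Real.rpow_le_rpow (by positivity) hm hD.le
      have h2m : (2 * (1 + σ)) ^ D = 2 ^ D * (1 + σ) ^ D :=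
        Real.mul_rpow (by norm_num) (by linarith)
      have hVr : V r ≤ max (V r) (V x') := le_max_left _ _
      calc V x ≤ C * C * C * (max 1 (|x| / r)) ^ D * V r := h2
        _ ≤ C * C * C * (2 ^ D * (1 + σ) ^ D) * V r := by
            rw [← h2m]
            exact mul_le_mul_of_nonneg_right
              (mul_le_mul_of_nonneg_left hmD (by positivity)) (hnn r)
        _ ≤ C * C * C * (2 ^ D * (1 + σ) ^ D) * max (V r) (V x') := by
            exact mul_le_mul_of_nonneg_left hVr (by positivity)
        _ = C * C * C * 2 ^ D * (1 + σ) ^ D * max (V r) (V x') := by ring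
    · -- use base point x'
      have hx'0 : x' ≠ 0 := by
        intro h; rw [h, abs_zero] at hx'r; linarith
      have h2 := aux_L2' hC hD hcont hnn hsym hs (a := x) (b := x') hx'0
      have hm : max 1 (|x| / |x'|) ≤ 2 * (1 + σ) := by
        have hx'pos : (0:ℝ) < |x'| := abs_pos.2 hx'0
        have hxb : |x| ≤ |x'| + |x - x'| := by
          have := abs_sub_abs_le_abs_sub x x'
          linarith
        have hσr : σ * r = |x - x'| := by
          rw [hσdef]; field_simp
        have hdiv : |x| / |x'| ≤ 2 * (1 + σ) := by
          rw [div_le_iff₀ hx'pos]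
          nlinarith [mul_le_mul_of_nonneg_left hx'r.le hσ0]
        refine max_le (by linarith) hdiv
      have hmD : (max 1 (|x| / |x'|)) ^ D ≤ (2 * (1 + σ)) ^ D :=
        Real.rpow_le_rpow (by positivity) hm hD.le
      have h2m : (2 * (1 + σ)) ^ D = 2 ^ D * (1 + σ) ^ D :=
        Real.mul_rpow (by norm_num) (by linarith)
      have hVx' : V x' ≤ max (V r) (V x') := le_max_right _ _
      calc V x ≤ C * C * C * (max 1 (|x| / |x'|)) ^ D * V x' := h2
        _ ≤ C * C * C * (2 ^ D * (1 + σ) ^ D) * V x' := by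
            rw [← h2m]
            exact mul_le_mul_of_nonneg_right
              (mul_le_mul_of_nonneg_left hmD (by positivity)) (hnn x')
        _ ≤ C * C * C * (2 ^ D * (1 + σ) ^ D) * max (V r) (V x') := by
            exact mul_le_mul_of_nonneg_left hVx' (by positivity)
        _ = C * C * C * 2 ^ D * (1 + σ) ^ D * max (V r) (V x') := by ring
  refine max_le hVx ?_
  calc V x' ≤ max (V r) (V x') := le_max_right _ _
    _ ≤ C * C * C * 2 ^ D * (1 + σ) ^ D * max (V r) (V x') := by
        exact le_mul_of_one_le_left hmaxnn hcoef1

lemma aux_W (hC : 1 ≤ C) (hD : 0 < D) (hcont : Continuous V) (hnn : ∀ x, 0 ≤ V x)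
    (hsym : ∀ x : ℝ, C⁻¹ * V x ≤ V (-x) ∧ V (-x) ≤ C * V x)
    (hs : ∀ x : ℝ, ∀ lam : ℝ, 1 ≤ lam → V x ≤ V (lam * x) ∧ V (lam * x) ≤ C * lam ^ D * V x)
    {r : ℝ} (hr : 0 < r) (x x' : ℝ) :
    Real.sqrt (max (V x) (V x')) ≤
      Real.sqrt (C * C * C * 2 ^ D) * (1 + |x - x'| / r) ^ (D / 2) *
        Real.sqrt (max (V r) (V x')) := by
  have h := aux_W_sq hC hD hcont hnn hsym hs hr x x'
  have h1σ : (0 : ℝ) ≤ 1 + |x - x'| / r := by positivity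
  calc Real.sqrt (max (V x) (V x'))
      ≤ Real.sqrt ((C * C * C * 2 ^ D) * (1 + |x - x'| / r) ^ D * max (V r) (V x')) :=
        Real.sqrt_le_sqrt h
    _ = Real.sqrt (C * C * C * 2 ^ D) * (1 + |x - x'| / r) ^ (D / 2) *
        Real.sqrt (max (V r) (V x')) := by
        rw [Real.sqrt_mul (by positivity), Real.sqrt_mul (by positivity),
          sqrt_rpow_half h1σ]

end AuxW

section AuxU
variable {C D : ℝ} {V : ℝ → ℝ}

lemma aux_U (hC : 1 ≤ C) (hD : 0 < D) (hcont : Continuous V) (hnn : ∀ x, 0 ≤ V x)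
    (hne : ∃ x, V x ≠ 0)
    (hsym : ∀ x : ℝ, C⁻¹ * V x ≤ V (-x) ∧ V (-x) ≤ C * V x)
    (hs : ∀ x : ℝ, ∀ lam : ℝ, 1 ≤ lam → V x ≤ V (lam * x) ∧ V (lam * x) ≤ C * lam ^ D * V x)
    {r Δ : ℝ} (hr : 0 < r) (hΔ : 0 ≤ Δ) :
    2 * r / Real.sqrt (C * C * C) *
        min (Δ / (r * Real.sqrt (V r))) ((Δ / (r * Real.sqrt (V r))) ^ ((2:ℝ) / (2 + D)))
      ≤ Ufun V Δ := by
  have hC0 : (0 : ℝ) < C := lt_of_lt_of_le one_pos hC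
  have hVr : 0 < V r := aux_pos hC hD hcont hnn hne hsym hs hr.ne'
  have hsVr : 0 < Real.sqrt (V r) := Real.sqrt_pos.2 hVr
  set K₀ : ℝ := Real.sqrt (C * C * C) with hK₀def
  have hK₀1 : (1 : ℝ) ≤ K₀ := by
    rw [hK₀def, show (1:ℝ) = Real.sqrt 1 from (Real.sqrt_one).symm]
    exact Real.sqrt_le_sqrt (by nlinarith)
  have hK₀0 : (0 : ℝ) < K₀ := lt_of_lt_of_le one_pos hK₀1
  set T : ℝ := Δ / (r * Real.sqrt (V r)) with hTdef
  have hT0 : 0 ≤ T := by positivity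
  set e : ℝ := 2 / (2 + D) with hedef
  have he0 : 0 < e := by positivity
  have he1 : e ≤ 1 := by
    rw [hedef, div_le_one (by linarith)]; linarith
  set g : ℝ := min T (T ^ e) with hgdef
  have hg0 : 0 ≤ g := le_min hT0 (Real.rpow_nonneg hT0 e)
  set ρ : ℝ := r * g / K₀ with hρdef
  have hρ0 : 0 ≤ ρ := by positivity
  -- key arithmetic estimate
  have hkey : ρ * (K₀ * (max 1 (ρ / r)) ^ (D / 2)) ≤ T * r := by
    rcases le_or_gt T 1 with hT1 | hT1
    · have hTe : T ≤ T ^ e := by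
        have := Real.rpow_le_rpow_of_exponent_ge' hT0 hT1 he0.le he1
        rwa [Real.rpow_one] at this
      have hg : g = T := min_eq_left hTe
      have hρr : ρ / r ≤ 1 := by
        have hle : ρ ≤ r := by
          rw [hρdef, hg]
          calc r * T / K₀ ≤ r * T := div_le_self (by positivity) hK₀1
            _ ≤ r := by nlinarith
        rw [div_le_one hr]; exact hle
      have hmax : max 1 (ρ / r) = 1 := max_eq_left hρr
      rw [hmax, Real.one_rpow, mul_one, hρdef, hg, div_mul_cancel₀ _ hK₀0.ne']
      ring_nf; exact le_refl _
    · have hTe : T ^ e ≤ T := by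
        have := Real.rpow_le_rpow_of_exponent_le hT1.le he1
        rwa [Real.rpow_one] at this
      have hg : g = T ^ e := min_eq_right hTe
      have hTe1 : (1:ℝ) ≤ T ^ e := by
        have := Real.rpow_le_rpow (by norm_num) hT1.le he0.le
        rwa [Real.one_rpow] at this
      have hρr : ρ / r = T ^ e / K₀ := by
        rw [hρdef, hg]; field_simp
      have hmax : max 1 (ρ / r) ≤ T ^ e := by
        refine max_le hTe1 ?_
        rw [hρr]; exact div_le_self (by positivity) hK₀1
      have hmaxD : (max 1 (ρ / r)) ^ (D / 2) ≤ (T ^ e) ^ (D / 2) :=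
        Real.rpow_le_rpow (le_trans (by norm_num) (le_max_left _ _)) hmax (by positivity)
      have hTee : (T ^ e) ^ (D / 2) = T ^ (e * (D / 2)) := (Real.rpow_mul hT0 _ _).symm
      have hsum : T ^ e * T ^ (e * (D / 2)) = T := by
        rw [← Real.rpow_add (lt_of_lt_of_le one_pos hT1.le)]
        have : e + e * (D / 2) = 1 := by
          rw [hedef]; field_simp
        rw [this, Real.rpow_one]
      calc ρ * (K₀ * (max 1 (ρ / r)) ^ (D / 2))
          ≤ ρ * (K₀ * T ^ (e * (D / 2))) := by
            refine mul_le_mul_of_nonneg_left ?_ hρ0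
            refine mul_le_mul_of_nonneg_left ?_ hK₀0.le
            rw [← hTee]; exact hmaxD
        _ = r * (T ^ e * T ^ (e * (D / 2))) := by
            rw [hρdef, hg]; field_simp
        _ = T * r := by rw [hsum]; ring
  -- the sublevel set
  set S : Set ℝ := {x : ℝ | |x| * Real.sqrt (V x) ≤ Δ} with hSdef
  have hsub1 : Set.Icc (-ρ) ρ ⊆ S := by
    intro x hx
    have hxρ : |x| ≤ ρ := abs_le.2 ⟨hx.1, hx.2⟩
    have h2 := aux_L2' hC hD hcont hnn hsym hs (a := x) (b := r) hr.ne'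
    rw [abs_of_pos hr] at h2
    have hsx : Real.sqrt (V x) ≤ K₀ * (max 1 (|x| / r)) ^ (D / 2) * Real.sqrt (V r) := by
      calc Real.sqrt (V x)
          ≤ Real.sqrt (C * C * C * (max 1 (|x| / r)) ^ D * V r) := Real.sqrt_le_sqrt h2
        _ = K₀ * (max 1 (|x| / r)) ^ (D / 2) * Real.sqrt (V r) := by
            rw [Real.sqrt_mul (by positivity), Real.sqrt_mul (by positivity),
              sqrt_rpow_half (le_trans (by norm_num) (le_max_left _ _)) D, hK₀def]
    have hmono : (max 1 (|x| / r)) ^ (D / 2) ≤ (max 1 (ρ / r)) ^ (D / 2) := by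
      refine Real.rpow_le_rpow (le_trans (by norm_num) (le_max_left _ _)) ?_ (by positivity)
      gcongr
    show |x| * Real.sqrt (V x) ≤ Δ
    have hΔeq : T * r * Real.sqrt (V r) = Δ := by
      rw [hTdef]; field_simp
    calc |x| * Real.sqrt (V x)
        ≤ ρ * (K₀ * (max 1 (ρ / r)) ^ (D / 2) * Real.sqrt (V r)) := by
          refine mul_le_mul hxρ ?_ (Real.sqrt_nonneg _) hρ0
          refine le_trans hsx ?_
          refine mul_le_mul_of_nonneg_right ?_ (Real.sqrt_nonneg _)
          exact mul_le_mul_of_nonneg_left hmono hK₀0.le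
      _ = ρ * (K₀ * (max 1 (ρ / r)) ^ (D / 2)) * Real.sqrt (V r) := by ring
      _ ≤ T * r * Real.sqrt (V r) :=
          mul_le_mul_of_nonneg_right hkey (Real.sqrt_nonneg _)
      _ = Δ := hΔeq
  set b : ℝ := max r (Real.sqrt C * Δ / Real.sqrt (V r)) with hbdef
  have hb0 : 0 < b := lt_of_lt_of_le hr (le_max_left _ _)
  have hsub2 : S ⊆ Set.Icc (-b) b := by
    intro x hx
    have hx' : |x| * Real.sqrt (V x) ≤ Δ := hx
    have habs : |x| ≤ b := by
      rcases le_or_gt |x| b with h | h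
      · exact h
      · exfalso
        have hxr : r < |x| := lt_of_le_of_lt (le_max_left _ _) h
        have hx0 : x ≠ 0 := by
          intro heq; rw [heq, abs_zero] at hxr; linarith
        have hVlow : V r / C ≤ V x := by
          rcases hx0.lt_or_gt with hneg | hpos
          · have h1 : V r ≤ V (-x) := aux_mono hs hr (by rw [abs_of_neg hneg] at hxr; linarith)
            have h2 : C⁻¹ * V (-x) ≤ V (- -x) := (hsym (-x)).1
            rw [neg_neg] at h2
            have h3 : C⁻¹ * V r ≤ C⁻¹ * V (-x) :=
              mul_le_mul_of_nonneg_left h1 (by positivity)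
            calc V r / C = C⁻¹ * V r := by rw [div_eq_inv_mul]
              _ ≤ C⁻¹ * V (-x) := h3
              _ ≤ V x := h2
          · have h1 : V r ≤ V x := aux_mono hs hr (by rw [abs_of_pos hpos] at hxr; linarith)
            calc V r / C ≤ V r := div_le_self (hnn r) hC
              _ ≤ V x := h1
        have hsqx : Real.sqrt (V r) / Real.sqrt C ≤ Real.sqrt (V x) := by
          have h1 := Real.sqrt_le_sqrt hVlow
          rwa [Real.sqrt_div hVr.le C] at h1
        have hsC : (0:ℝ) < Real.sqrt C := Real.sqrt_pos.2 hC0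
        have hquotpos : (0:ℝ) < Real.sqrt (V r) / Real.sqrt C := by positivity
        have hbig : Δ < |x| * Real.sqrt (V x) := by
          have s1 : b * (Real.sqrt (V r) / Real.sqrt C) < |x| * (Real.sqrt (V r) / Real.sqrt C) :=
            mul_lt_mul_of_pos_right h hquotpos
          have s2 : Real.sqrt C * Δ / Real.sqrt (V r) * (Real.sqrt (V r) / Real.sqrt C)
              ≤ b * (Real.sqrt (V r) / Real.sqrt C) :=
            mul_le_mul_of_nonneg_right (le_max_right _ _) hquotpos.le
          have s3 : Real.sqrt C * Δ / Real.sqrt (V r) * (Real.sqrt (V r) / Real.sqrt C) = Δ := by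
            field_simp
          have s4 : |x| * (Real.sqrt (V r) / Real.sqrt C) ≤ |x| * Real.sqrt (V x) :=
            mul_le_mul_of_nonneg_left hsqx (abs_nonneg _)
          linarith
        linarith
    exact Set.mem_Icc.2 (abs_le.1 habs)
  have hvol2 : volume S ≤ ENNReal.ofReal (b - (-b)) := by
    calc volume S ≤ volume (Set.Icc (-b) b) := measure_mono hsub2
      _ = ENNReal.ofReal (b - (-b)) := Real.volume_Icc
  have hfin : volume S ≠ ⊤ := ne_top_of_le_ne_top ENNReal.ofReal_ne_top hvol2
  have hvol1 : ENNReal.ofReal (ρ - (-ρ)) ≤ volume S := by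
    rw [← Real.volume_Icc]; exact measure_mono hsub1
  have h2ρ : ρ - (-ρ) ≤ Ufun V Δ := by
    have h1 := ENNReal.toReal_mono hfin hvol1
    rwa [ENNReal.toReal_ofReal (by linarith)] at h1
  calc 2 * r / K₀ * g = ρ - (-ρ) := by rw [hρdef]; ring
    _ ≤ Ufun V Δ := h2ρ
end AuxU


set_option maxHeartbeats 1000000 in
lemma key_pointwise {D α β A2 K₁ c : ℝ} (hD : 0 < D) (hβ0 : 0 ≤ β) (hβ1 : β < 1)
    (hα1 : 1 < α) (hA2low : (1 + D / 2) * (1 - β) < A2) (hA2high : A2 < α - 1)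
    (hK₁ : 1 ≤ K₁) (hc : 0 < c)
    {σ u : ℝ} (hσ : 0 ≤ σ) (hu : 0 ≤ u) :
    (1 + σ + min (u / (K₁ * (1 + σ) ^ (D / 2)))
        (c * min u (u ^ ((2:ℝ) / (2 + D))))) ^ (-α) * (1 + u) ^ (-β) ≤
      (2 ^ (2 * A2 / (2 + D)) * (c⁻¹ + 1) ^ A2 +
          (1 + (c * K₁) ^ ((2 + D) / D)) ^ (2 * A2 / (2 + D))) *
        ((1 + σ) ^ (-(α - A2)) * (1 + u) ^ (-(β + 2 * A2 / (2 + D)))) := by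
  have hD2 : (0:ℝ) < 2 + D := by linarith
  set e : ℝ := 2 / (2 + D) with hedef
  have he0 : 0 < e := by positivity
  have he1 : e ≤ 1 := by rw [hedef, div_le_one hD2]; linarith
  set qq : ℝ := 2 * A2 / (2 + D) with hqqdef
  have hA20 : 0 < A2 := lt_of_le_of_lt (by nlinarith) hA2low
  have hqq0 : 0 < qq := by rw [hqqdef]; positivity
  have hqqeA : qq = e * A2 := by rw [hqqdef, hedef]; ring
  have hα'0 : 0 ≤ α - A2 := by linarith
  set g : ℝ := min u (u ^ e) with hgdef
  have hg0 : 0 ≤ g := le_min hu (Real.rpow_nonneg hu e)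
  have h1σ : (1:ℝ) ≤ 1 + σ := by linarith
  have h1u : (1:ℝ) ≤ 1 + u := by linarith
  have hKσpos : (0:ℝ) < K₁ * (1 + σ) ^ (D / 2) := by positivity
  set B : ℝ := 2 ^ qq * (c⁻¹ + 1) ^ A2 with hBdef
  set K₂ : ℝ := (c * K₁) ^ ((2 + D) / D) with hK₂def
  set B₂ : ℝ := (1 + K₂) ^ qq with hB₂def
  have hK₂0 : 0 ≤ K₂ := Real.rpow_nonneg (by positivity) _
  have hB0 : 0 ≤ B := by
    rw [hBdef]
    exact mul_nonneg (Real.rpow_nonneg (by norm_num) _) (Real.rpow_nonneg (by positivity) _)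
  have hB₂0 : 0 ≤ B₂ := Real.rpow_nonneg (by positivity) _
  have hXfac0 : 0 ≤ (1 + σ) ^ (-(α - A2)) * (1 + u) ^ (-(β + qq)) :=
    mul_nonneg (Real.rpow_nonneg (by linarith) _) (Real.rpow_nonneg (by linarith) _)
  -- the divide trick
  have divide : ∀ X Bi : ℝ, 0 ≤ X → 0 ≤ Bi → (1 + u) ^ qq ≤ Bi * (1 + X) ^ A2 →
      (1 + X) ^ (-A2) * (1 + u) ^ (-β) ≤ Bi * (1 + u) ^ (-(β + qq)) := by
    intro X Bi hX hBi hla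
    have hXp : (0:ℝ) < 1 + X := by linarith
    have e1 : (1 + u) ^ (-β) = (1 + u) ^ qq * (1 + u) ^ (-(β + qq)) := by
      rw [← Real.rpow_add (by linarith)]; congr 1; ring
    have e2 : (1 + X) ^ (-A2) = ((1 + X) ^ A2)⁻¹ := Real.rpow_neg hXp.le A2
    have hXA : (0:ℝ) < (1 + X) ^ A2 := Real.rpow_pos_of_pos hXp A2
    rw [e1, e2]
    have h5 : ((1 + X) ^ A2)⁻¹ * ((1 + u) ^ qq * (1 + u) ^ (-(β + qq)))
        ≤ ((1 + X) ^ A2)⁻¹ * (Bi * (1 + X) ^ A2 * (1 + u) ^ (-(β + qq))) := by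
      refine mul_le_mul_of_nonneg_left ?_ (by positivity)
      exact mul_le_mul_of_nonneg_right hla (Real.rpow_nonneg (by linarith) _)
    refine le_trans h5 (le_of_eq ?_)
    field_simp
  rcases min_cases (u / (K₁ * (1 + σ) ^ (D / 2))) (c * g) with ⟨hmineq, hle⟩ | ⟨hmineq, hle⟩
  · -- Case 2 : min is the quotient, u is controlled by σ
    rw [hmineq]
    set P : ℝ := (2 + D) / 2 with hPdef
    have hPqq : P * qq = A2 := by rw [hPdef, hqqdef]; field_simp
    have h1σP : (1:ℝ) ≤ (1 + σ) ^ P := by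
      have := Real.rpow_le_rpow (by norm_num) h1σ (by positivity : (0:ℝ) ≤ P)
      rwa [Real.one_rpow] at this
    -- u ≤ K₂ * (1+σ)^P
    have hu2 : u ≤ K₂ * (1 + σ) ^ P := by
      rcases hu.eq_or_lt with h0 | hu0
      · rw [← h0]; positivity
      · have hgu : g ≤ u ^ e := min_le_right _ _
        have hstep : u ≤ c * u ^ e * (K₁ * (1 + σ) ^ (D / 2)) := by
          have h1 : u / (K₁ * (1 + σ) ^ (D / 2)) ≤ c * u ^ e :=
            le_trans hle (mul_le_mul_of_nonneg_left hgu hc.le)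
          calc u = u / (K₁ * (1 + σ) ^ (D / 2)) * (K₁ * (1 + σ) ^ (D / 2)) := by
                field_simp
            _ ≤ c * u ^ e * (K₁ * (1 + σ) ^ (D / 2)) :=
                mul_le_mul_of_nonneg_right h1 hKσpos.le
        have hue : (0:ℝ) < u ^ e := Real.rpow_pos_of_pos hu0 e
        have hsplitu : u ^ (1 - e) * u ^ e = u := by
          rw [← Real.rpow_add hu0]; norm_num
        have h1e : u ^ (1 - e) ≤ c * K₁ * (1 + σ) ^ (D / 2) := by
          have h2 : u ^ (1 - e) * u ^ e ≤ c * K₁ * (1 + σ) ^ (D / 2) * u ^ e := by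
            rw [hsplitu]
            calc u ≤ c * u ^ e * (K₁ * (1 + σ) ^ (D / 2)) := hstep
              _ = c * K₁ * (1 + σ) ^ (D / 2) * u ^ e := by ring
          exact le_of_mul_le_mul_right h2 hue
        set N : ℝ := (2 + D) / D with hNdef
        have hN0 : 0 < N := by positivity
        have h3 : (u ^ (1 - e)) ^ N ≤ (c * K₁ * (1 + σ) ^ (D / 2)) ^ N :=
          Real.rpow_le_rpow (Real.rpow_nonneg hu _) h1e hN0.le
        have h4 : (u ^ (1 - e)) ^ N = u := by
          rw [← Real.rpow_mul hu]
          have : (1 - e) * N = 1 := by rw [hedef, hNdef]; field_simp; ring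
          rw [this, Real.rpow_one]
        have h5 : (c * K₁ * (1 + σ) ^ (D / 2)) ^ N = K₂ * (1 + σ) ^ P := by
          rw [Real.mul_rpow (by positivity) (by positivity), ← Real.rpow_mul (by linarith)]
          have : D / 2 * N = P := by rw [hNdef, hPdef]; field_simp
          rw [this, hK₂def, hNdef]
        rw [h4, h5] at h3; exact h3
    -- base bound
    have hbase : (1 + σ + u / (K₁ * (1 + σ) ^ (D / 2))) ^ (-α)
        ≤ (1 + σ) ^ (-(α - A2)) * (1 + σ) ^ (-A2) := by
      have h1 : (1 + σ + u / (K₁ * (1 + σ) ^ (D / 2))) ^ (-α) ≤ (1 + σ) ^ (-α) := by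
        refine Real.rpow_le_rpow_of_nonpos (by linarith) ?_ (by linarith)
        have : 0 ≤ u / (K₁ * (1 + σ) ^ (D / 2)) := by positivity
        linarith
      rw [← Real.rpow_add (by linarith : (0:ℝ) < 1 + σ)] at *
      calc (1 + σ + u / (K₁ * (1 + σ) ^ (D / 2))) ^ (-α) ≤ (1 + σ) ^ (-α) := h1
        _ = (1 + σ) ^ (-(α - A2) + -A2) := by congr 1; ring
    -- (1+u)^qq ≤ B₂ (1+σ)^A2
    have hBclaim : (1 + u) ^ qq ≤ B₂ * (1 + σ) ^ A2 := by
      have h1 : 1 + u ≤ (1 + K₂) * (1 + σ) ^ P := by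
        have : (1:ℝ) * 1 ≤ (1 + K₂) * (1 + σ) ^ P := by
          refine mul_le_mul (by linarith) h1σP (by norm_num) (by positivity)
        nlinarith [mul_le_mul_of_nonneg_left h1σP hK₂0]
      calc (1 + u) ^ qq ≤ ((1 + K₂) * (1 + σ) ^ P) ^ qq :=
            Real.rpow_le_rpow (by linarith) h1 hqq0.le
        _ = B₂ * ((1 + σ) ^ P) ^ qq := by
            rw [Real.mul_rpow (by positivity) (by positivity), hB₂def]
        _ = B₂ * (1 + σ) ^ A2 := by
            rw [← Real.rpow_mul (by linarith), hPqq]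
    have hdiv := divide σ B₂ hσ hB₂0 hBclaim
    calc (1 + σ + u / (K₁ * (1 + σ) ^ (D / 2))) ^ (-α) * (1 + u) ^ (-β)
        ≤ ((1 + σ) ^ (-(α - A2)) * (1 + σ) ^ (-A2)) * (1 + u) ^ (-β) :=
          mul_le_mul_of_nonneg_right hbase (Real.rpow_nonneg (by linarith) _)
      _ = (1 + σ) ^ (-(α - A2)) * ((1 + σ) ^ (-A2) * (1 + u) ^ (-β)) := by ring
      _ ≤ (1 + σ) ^ (-(α - A2)) * (B₂ * (1 + u) ^ (-(β + qq))) :=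
          mul_le_mul_of_nonneg_left hdiv (Real.rpow_nonneg (by linarith) _)
      _ = B₂ * ((1 + σ) ^ (-(α - A2)) * (1 + u) ^ (-(β + qq))) := by ring
      _ ≤ (B + B₂) * ((1 + σ) ^ (-(α - A2)) * (1 + u) ^ (-(β + qq))) :=
          mul_le_mul_of_nonneg_right (by linarith) hXfac0
  · -- Case 1 : min = c * g
    rw [hmineq]
    have hcg0 : 0 ≤ c * g := mul_nonneg hc.le hg0
    have hbase : (1 + σ + c * g) ^ (-α)
        ≤ (1 + σ) ^ (-(α - A2)) * (1 + c * g) ^ (-A2) := by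
      have hpos : (0:ℝ) < 1 + σ + c * g := by linarith
      have hsplit : (1 + σ + c * g) ^ (-α)
          = (1 + σ + c * g) ^ (-(α - A2)) * (1 + σ + c * g) ^ (-A2) := by
        rw [← Real.rpow_add hpos]; congr 1; ring
      rw [hsplit]
      refine mul_le_mul ?_ ?_ (Real.rpow_nonneg hpos.le _) (Real.rpow_nonneg (by linarith) _)
      · exact Real.rpow_le_rpow_of_nonpos (by linarith) (by linarith) (by linarith)
      · exact Real.rpow_le_rpow_of_nonpos (by linarith) (by linarith) (by linarith)
    have hBclaim : (1 + u) ^ qq ≤ B * (1 + c * g) ^ A2 := by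
      have hcg1 : (1:ℝ) ≤ (1 + c * g) ^ A2 := by
        have := Real.rpow_le_rpow (by norm_num) (by linarith : (1:ℝ) ≤ 1 + c * g) hA20.le
        rwa [Real.one_rpow] at this
      have hc11 : (1:ℝ) ≤ (c⁻¹ + 1) ^ A2 := by
        have hb : (1:ℝ) ≤ c⁻¹ + 1 := by
          have : (0:ℝ) ≤ c⁻¹ := inv_nonneg.mpr hc.le
          linarith
        have := Real.rpow_le_rpow (by norm_num) hb hA20.le
        rwa [Real.one_rpow] at this
      rcases le_or_gt u 1 with hu1 | hu1
      · have h1 : (1 + u) ^ qq ≤ 2 ^ qq :=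
          Real.rpow_le_rpow (by linarith) (by linarith) hqq0.le
        calc (1 + u) ^ qq ≤ 2 ^ qq := h1
          _ ≤ 2 ^ qq * ((c⁻¹ + 1) ^ A2 * (1 + c * g) ^ A2) := by
              refine le_mul_of_one_le_right (by positivity) ?_
              calc (1:ℝ) = 1 * 1 := by norm_num
                _ ≤ (c⁻¹ + 1) ^ A2 * (1 + c * g) ^ A2 :=
                  mul_le_mul hc11 hcg1 (by norm_num) (by positivity)
          _ = B * (1 + c * g) ^ A2 := by rw [hBdef]; ring
      · have hge : g = u ^ e := by
          refine min_eq_right ?_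
          have := Real.rpow_le_rpow_of_exponent_le hu1.le he1
          rwa [Real.rpow_one] at this
        have c1 : (1 + u) ^ qq ≤ (2 * u) ^ qq :=
          Real.rpow_le_rpow (by linarith) (by linarith) hqq0.le
        have c2 : (2 * u) ^ qq = 2 ^ qq * (u ^ e) ^ A2 := by
          rw [Real.mul_rpow (by norm_num) hu, hqqeA, Real.rpow_mul hu]
        have c3 : (u ^ e) ^ A2 ≤ ((c⁻¹ + 1) * (1 + c * u ^ e)) ^ A2 := by
          refine Real.rpow_le_rpow (Real.rpow_nonneg hu _) ?_ hA20.le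
          have hue0 : (0:ℝ) ≤ u ^ e := Real.rpow_nonneg hu _
          have hexp : (c⁻¹ + 1) * (1 + c * u ^ e) = c⁻¹ + u ^ e + 1 + c * u ^ e := by
            field_simp; ring
          have : (0:ℝ) ≤ c⁻¹ := by positivity
          nlinarith [mul_nonneg hc.le hue0]
        have c4 : ((c⁻¹ + 1) * (1 + c * u ^ e)) ^ A2
            = (c⁻¹ + 1) ^ A2 * (1 + c * u ^ e) ^ A2 := by
          rw [Real.mul_rpow (by positivity) (by positivity)]
        calc (1 + u) ^ qq ≤ 2 ^ qq * (u ^ e) ^ A2 := by rw [← c2]; exact c1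
          _ ≤ 2 ^ qq * ((c⁻¹ + 1) ^ A2 * (1 + c * u ^ e) ^ A2) := by
              rw [← c4]
              exact mul_le_mul_of_nonneg_left c3 (by positivity)
          _ = B * (1 + c * g) ^ A2 := by rw [hBdef, hge]; ring
    have hdiv := divide (c * g) B hcg0 hB0 hBclaim
    calc (1 + σ + c * g) ^ (-α) * (1 + u) ^ (-β)
        ≤ ((1 + σ) ^ (-(α - A2)) * (1 + c * g) ^ (-A2)) * (1 + u) ^ (-β) :=
          mul_le_mul_of_nonneg_right hbase (Real.rpow_nonneg (by linarith) _)
      _ = (1 + σ) ^ (-(α - A2)) * ((1 + c * g) ^ (-A2) * (1 + u) ^ (-β)) := by ring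
      _ ≤ (1 + σ) ^ (-(α - A2)) * (B * (1 + u) ^ (-(β + qq))) :=
          mul_le_mul_of_nonneg_left hdiv (Real.rpow_nonneg (by linarith) _)
      _ = B * ((1 + σ) ^ (-(α - A2)) * (1 + u) ^ (-(β + qq))) := by ring
      _ ≤ (B + B₂) * ((1 + σ) ^ (-(α - A2)) * (1 + u) ^ (-(β + qq))) :=
          mul_le_mul_of_nonneg_right (by linarith) hXfac0


lemma cont_onepow {a b p : ℝ} (hb : 0 < b) :
    Continuous fun x : ℝ => (1 + |x - a| / b) ^ (-p) := by
  refine Continuous.rpow_const ?_ ?_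
  · exact continuous_const.add ((continuous_abs.comp (continuous_id.sub continuous_const)).div_const b)
  · intro x
    left
    have : (0:ℝ) ≤ |x - a| / b := by positivity
    intro h
    nlinarith

lemma integrable_J {p : ℝ} (hp : 1 < p) :
    Integrable (fun x : ℝ => (1 + |x|) ^ (-p)) := by
  have h := integrable_one_add_norm (E := ℝ) (μ := volume) (r := p) (by simpa using hp)
  simpa [Real.norm_eq_abs] using h

lemma lint_one_add {p : ℝ} (hp : 1 < p) {b : ℝ} (hb : 0 < b) (a : ℝ) :
    (∫⁻ x : ℝ, ENNReal.ofReal ((1 + |x - a| / b) ^ (-p))) =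
      ENNReal.ofReal b * ENNReal.ofReal (∫ x : ℝ, (1 + |x|) ^ (-p)) := by
  set F : ℝ → ℝ≥0∞ := fun t => ENNReal.ofReal ((1 + |t|) ^ (-p)) with hFdef
  have hFmeas : Measurable F := by
    refine ENNReal.measurable_ofReal.comp ?_
    have : Continuous fun t : ℝ => (1 + |t|) ^ (-p) := by
      have h := cont_onepow (a := 0) (b := 1) (p := p) one_pos
      simpa using h
    exact this.measurable
  have hstep1 : (fun x : ℝ => ENNReal.ofReal ((1 + |x - a| / b) ^ (-p)))
      = fun x => F ((x - a) / b) := by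
    funext x
    rw [hFdef]
    simp only
    rw [abs_div, abs_of_pos hb]
  rw [hstep1]
  have hstep2 : (∫⁻ x : ℝ, F ((x - a) / b)) = ∫⁻ x : ℝ, F (x / b) :=
    lintegral_sub_right_eq_self (fun y => F (y / b)) a
  rw [hstep2]
  have hstep3 : (∫⁻ x : ℝ, F (x / b)) = ∫⁻ x : ℝ, F (b⁻¹ * x) := by
    congr 1; funext x; rw [div_eq_inv_mul]
  rw [hstep3]
  have hstep4 : (∫⁻ x : ℝ, F (b⁻¹ * x)) = ∫⁻ y, F y ∂(Measure.map (fun x : ℝ => b⁻¹ * x) volume) :=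
    (lintegral_map hFmeas (measurable_const_mul b⁻¹)).symm
  rw [hstep4, Real.map_volume_mul_left (inv_ne_zero hb.ne'), lintegral_smul_measure]
  have habs : |b⁻¹⁻¹| = b := by rw [inv_inv, abs_of_pos hb]
  rw [habs]
  congr 1
  rw [hFdef]
  exact (ofReal_integral_eq_lintegral_ofReal (integrable_J hp)
    (Filter.Eventually.of_forall fun x => Real.rpow_nonneg (by positivity) _)).symm


set_option maxHeartbeats 2000000 in
/-- For every `β ∈ [0,1)` and `α > 1 + (1+D/2)(1−β)` there is `C′ > 0`, depending only on
`C, D, α, β`, such that for all `r > 0` and `z′ ∈ ℝ²`: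
`∫_{ℝ²} (1 + dist_*(z,z′)/r)^{−α} (1 + ϖ_r(z,z′))^{−β} dz ≤ C′·r²·max{V(r),V(x′)}^{1/2}`. -/
theorem weight_integral_estimate (C D α β : ℝ) (hC : 1 ≤ C) (hD : 0 < D)
    (hβ0 : 0 ≤ β) (hβ1 : β < 1) (hα : 1 + (1 + D / 2) * (1 - β) < α) :
    ∃ C' : ℝ, 0 < C' ∧
      ∀ V : ℝ → ℝ, Continuous V → (∀ x, 0 ≤ V x) → (∃ x, V x ≠ 0) →
        (∀ x : ℝ, C⁻¹ * V x ≤ V (-x) ∧ V (-x) ≤ C * V x) →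
        (∀ x : ℝ, ∀ lam : ℝ, 1 ≤ lam → V x ≤ V (lam * x) ∧ V (lam * x) ≤ C * lam ^ D * V x) →
        ∀ r : ℝ, 0 < r → ∀ z' : ℝ × ℝ,
          (∫⁻ z : ℝ × ℝ,
              ENNReal.ofReal
                ((1 + distStar V z z' / r) ^ (-α) * (1 + grushinWeight V r z z') ^ (-β))) ≤
            ENNReal.ofReal (C' * r ^ 2 * Real.sqrt (max (V r) (V z'.1))) := by
  have hD2 : (0:ℝ) < 2 + D := by linarith
  have h1β : (0:ℝ) < 1 - β := by linarith
  have hα1 : 1 < α := by nlinarith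
  have hC0 : (0:ℝ) < C := lt_of_lt_of_le one_pos hC
  set A2 : ℝ := ((1 + D / 2) * (1 - β) + (α - 1)) / 2 with hA2def
  have hA2low : (1 + D / 2) * (1 - β) < A2 := by rw [hA2def]; linarith
  have hA2high : A2 < α - 1 := by rw [hA2def]; linarith
  have hA20 : 0 < A2 := lt_trans (by nlinarith) hA2low
  have hα'1 : 1 < α - A2 := by linarith
  have hq'1 : 1 < β + 2 * A2 / (2 + D) := by
    have h1 : (1 - β) * (2 + D) < 2 * A2 := by nlinarith
    have h2 : 1 - β < 2 * A2 / (2 + D) := by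
      rw [lt_div_iff₀ hD2]; linarith
    linarith
  have h2D1 : (1:ℝ) ≤ 2 ^ D := by
    have := Real.rpow_le_rpow (by norm_num) (by norm_num : (1:ℝ) ≤ 2) hD.le
    rwa [Real.one_rpow] at this
  set K₁ : ℝ := Real.sqrt (C * C * C * 2 ^ D) with hK₁def
  have hK₁1 : (1:ℝ) ≤ K₁ := by
    rw [hK₁def, show (1:ℝ) = Real.sqrt 1 from Real.sqrt_one.symm]
    refine Real.sqrt_le_sqrt ?_
    have hCCC : (1:ℝ) ≤ C * C * C := by nlinarith
    calc (1:ℝ) = 1 * 1 := by norm_num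
      _ ≤ (C * C * C) * 2 ^ D := mul_le_mul hCCC h2D1 (by norm_num) (by positivity)
  have hsC3 : (0:ℝ) < Real.sqrt (C * C * C) := Real.sqrt_pos.2 (by positivity)
  set c : ℝ := 2 / Real.sqrt (C * C * C) with hcdef
  have hc0 : 0 < c := by rw [hcdef]; positivity
  set Bconst : ℝ := 2 ^ (2 * A2 / (2 + D)) * (c⁻¹ + 1) ^ A2 +
      (1 + (c * K₁) ^ ((2 + D) / D)) ^ (2 * A2 / (2 + D)) with hBdef
  have hB0 : 0 ≤ Bconst := by
    rw [hBdef]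
    have h1 : (0:ℝ) ≤ 2 ^ (2 * A2 / (2 + D)) := Real.rpow_nonneg (by norm_num) _
    have h2 : (0:ℝ) ≤ (c⁻¹ + 1) ^ A2 := Real.rpow_nonneg (by positivity) _
    have h3 : (0:ℝ) ≤ (1 + (c * K₁) ^ ((2 + D) / D)) ^ (2 * A2 / (2 + D)) := by
      refine Real.rpow_nonneg ?_ _
      have : (0:ℝ) ≤ (c * K₁) ^ ((2 + D) / D) := Real.rpow_nonneg (by positivity) _
      linarith
    nlinarith
  set Jα : ℝ := ∫ x : ℝ, (1 + |x|) ^ (-(α - A2)) with hJαdef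
  set Jq : ℝ := ∫ x : ℝ, (1 + |x|) ^ (-(β + 2 * A2 / (2 + D))) with hJqdef
  have hJα0 : 0 ≤ Jα :=
    integral_nonneg fun x => Real.rpow_nonneg (by positivity) _
  have hJq0 : 0 ≤ Jq :=
    integral_nonneg fun x => Real.rpow_nonneg (by positivity) _
  refine ⟨max 1 (Bconst * Jα * Jq), lt_of_lt_of_le one_pos (le_max_left _ _), ?_⟩
  intro V hcont hnn hne hsym hs r hr z'
  have hVr : 0 < V r := aux_pos hC hD hcont hnn hne hsym hs hr.ne'
  set M : ℝ := Real.sqrt (max (V r) (V z'.1)) with hMdef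
  have hM0 : 0 < M := Real.sqrt_pos.2 (lt_of_lt_of_le hVr (le_max_left _ _))
  have hrM : 0 < r * M := mul_pos hr hM0
  -- pointwise bound
  have hpt : ∀ z : ℝ × ℝ,
      (1 + distStar V z z' / r) ^ (-α) * (1 + grushinWeight V r z z') ^ (-β) ≤
        Bconst * ((1 + |z.1 - z'.1| / r) ^ (-(α - A2)) *
          (1 + |z.2 - z'.2| / (r * M)) ^ (-(β + 2 * A2 / (2 + D)))) := by
    intro z
    have hσ0 : 0 ≤ |z.1 - z'.1| / r := by positivity
    have hu0 : 0 ≤ |z.2 - z'.2| / (r * M) := by positivity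
    have hΔ0 : 0 ≤ |z.2 - z'.2| := abs_nonneg _
    have hgu0 : 0 ≤ min (|z.2 - z'.2| / (r * M)) ((|z.2 - z'.2| / (r * M)) ^ ((2:ℝ) / (2 + D))) :=
      le_min hu0 (Real.rpow_nonneg hu0 _)
    have h1σ : (1:ℝ) ≤ 1 + |z.1 - z'.1| / r := by linarith
    have hKσpos : (0:ℝ) < K₁ * (1 + |z.1 - z'.1| / r) ^ (D / 2) := by
      have h0 : (0:ℝ) < (1 + |z.1 - z'.1| / r) ^ (D / 2) :=
        Real.rpow_pos_of_pos (by linarith) _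
      nlinarith
    -- Ufun lower bound
    have hsVr0 : 0 < Real.sqrt (V r) := Real.sqrt_pos.2 hVr
    have hsVrM : Real.sqrt (V r) ≤ M := by
      rw [hMdef]; exact Real.sqrt_le_sqrt (le_max_left _ _)
    have huT : |z.2 - z'.2| / (r * M) ≤ |z.2 - z'.2| / (r * Real.sqrt (V r)) :=
      div_le_div_of_nonneg_left hΔ0 (mul_pos hr hsVr0)
        (mul_le_mul_of_nonneg_left hsVrM hr.le)
    have hUl : 2 * r / Real.sqrt (C * C * C) *
        min (|z.2 - z'.2| / (r * M)) ((|z.2 - z'.2| / (r * M)) ^ ((2:ℝ) / (2 + D))) ≤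
        Ufun V |z.2 - z'.2| := by
      have haux := aux_U hC hD hcont hnn hne hsym hs hr hΔ0
      refine le_trans ?_ haux
      refine mul_le_mul_of_nonneg_left ?_ (by positivity)
      exact min_le_min huT (Real.rpow_le_rpow hu0 huT (by positivity))
    have hlow0 : 0 ≤ min (|z.2 - z'.2| / (K₁ * (1 + |z.1 - z'.1| / r) ^ (D / 2) * M))
        (2 * r / Real.sqrt (C * C * C) *
          min (|z.2 - z'.2| / (r * M)) ((|z.2 - z'.2| / (r * M)) ^ ((2:ℝ) / (2 + D)))) :=
      le_min (by positivity) (by positivity)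
    -- lower bound on distStar
    have hd : |z.1 - z'.1| +
        min (|z.2 - z'.2| / (K₁ * (1 + |z.1 - z'.1| / r) ^ (D / 2) * M))
          (2 * r / Real.sqrt (C * C * C) *
            min (|z.2 - z'.2| / (r * M)) ((|z.2 - z'.2| / (r * M)) ^ ((2:ℝ) / (2 + D)))) ≤
        distStar V z z' := by
      rw [distStar]
      refine add_le_add (le_refl _) ?_
      by_cases hmax0 : max (V z.1) (V z'.1) = 0
      · rw [if_pos hmax0]
        by_cases hy : z.2 = z'.2
        · rw [if_pos hy]
          have hΔz : |z.2 - z'.2| = 0 := by rw [hy, sub_self, abs_zero]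
          refine le_trans (min_le_right _ _) ?_
          rw [hΔz]
          have h00 : ((0:ℝ) / (r * M)) = 0 := zero_div _
          rw [h00, Real.zero_rpow (by positivity : (0:ℝ) < (2:ℝ) / (2 + D)).ne']
          simp
        · rw [if_neg hy]
          exact le_trans (min_le_right _ _) hUl
      · rw [if_neg hmax0]
        refine le_min ?_ (le_trans (min_le_right _ _) hUl)
        refine le_trans (min_le_left _ _) ?_
        have hmaxpos : 0 < max (V z.1) (V z'.1) :=
          lt_of_le_of_ne (le_trans (hnn z.1) (le_max_left _ _)) (Ne.symm hmax0)
        have hsmax : 0 < Real.sqrt (max (V z.1) (V z'.1)) := Real.sqrt_pos.2 hmaxpos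
        have hW := aux_W hC hD hcont hnn hsym hs hr z.1 z'.1
        rw [hK₁def, hMdef]
        exact div_le_div_of_nonneg_left hΔ0 hsmax hW
    -- first factor bound
    have hlowr : (min (|z.2 - z'.2| / (K₁ * (1 + |z.1 - z'.1| / r) ^ (D / 2) * M))
          (2 * r / Real.sqrt (C * C * C) *
            min (|z.2 - z'.2| / (r * M)) ((|z.2 - z'.2| / (r * M)) ^ ((2:ℝ) / (2 + D))))) / r =
        min ((|z.2 - z'.2| / (r * M)) / (K₁ * (1 + |z.1 - z'.1| / r) ^ (D / 2)))
          (c * min (|z.2 - z'.2| / (r * M)) ((|z.2 - z'.2| / (r * M)) ^ ((2:ℝ) / (2 + D)))) := by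
      rw [← min_div_div_right hr.le]
      congr 1
      · rw [div_div, div_div]
        congr 1
        ring
      · rw [hcdef]
        have heq : 2 * r / Real.sqrt (C * C * C) *
            min (|z.2 - z'.2| / (r * M)) ((|z.2 - z'.2| / (r * M)) ^ ((2:ℝ) / (2 + D))) =
            (2 / Real.sqrt (C * C * C) *
              min (|z.2 - z'.2| / (r * M)) ((|z.2 - z'.2| / (r * M)) ^ ((2:ℝ) / (2 + D)))) * r := by
          ring
        rw [heq, mul_div_cancel_right₀ _ hr.ne']
    have hminnn : 0 ≤ min ((|z.2 - z'.2| / (r * M)) / (K₁ * (1 + |z.1 - z'.1| / r) ^ (D / 2)))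
          (c * min (|z.2 - z'.2| / (r * M)) ((|z.2 - z'.2| / (r * M)) ^ ((2:ℝ) / (2 + D)))) :=
      le_min (by positivity) (by positivity)
    have hfirst : (1 + distStar V z z' / r) ^ (-α) ≤
        (1 + |z.1 - z'.1| / r +
          min ((|z.2 - z'.2| / (r * M)) / (K₁ * (1 + |z.1 - z'.1| / r) ^ (D / 2)))
            (c * min (|z.2 - z'.2| / (r * M))
              ((|z.2 - z'.2| / (r * M)) ^ ((2:ℝ) / (2 + D))))) ^ (-α) := by
      refine Real.rpow_le_rpow_of_nonpos (by linarith) ?_ (by linarith)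
      have h2 : (|z.1 - z'.1| +
          min (|z.2 - z'.2| / (K₁ * (1 + |z.1 - z'.1| / r) ^ (D / 2) * M))
            (2 * r / Real.sqrt (C * C * C) *
              min (|z.2 - z'.2| / (r * M))
                ((|z.2 - z'.2| / (r * M)) ^ ((2:ℝ) / (2 + D))))) / r ≤
          distStar V z z' / r := by gcongr
      rw [add_div, hlowr] at h2
      linarith
    have hsecond : grushinWeight V r z z' = |z.2 - z'.2| / (r * M) := by
      rw [grushinWeight, hMdef]
    have hkey := key_pointwise (σ := |z.1 - z'.1| / r) (u := |z.2 - z'.2| / (r * M))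
      hD hβ0 hβ1 hα1 hA2low hA2high hK₁1 hc0 hσ0 hu0
    calc (1 + distStar V z z' / r) ^ (-α) * (1 + grushinWeight V r z z') ^ (-β)
        = (1 + distStar V z z' / r) ^ (-α) * (1 + |z.2 - z'.2| / (r * M)) ^ (-β) := by
          rw [hsecond]
      _ ≤ (1 + |z.1 - z'.1| / r +
            min ((|z.2 - z'.2| / (r * M)) / (K₁ * (1 + |z.1 - z'.1| / r) ^ (D / 2)))
              (c * min (|z.2 - z'.2| / (r * M))
                ((|z.2 - z'.2| / (r * M)) ^ ((2:ℝ) / (2 + D))))) ^ (-α) *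
            (1 + |z.2 - z'.2| / (r * M)) ^ (-β) :=
          mul_le_mul_of_nonneg_right hfirst (Real.rpow_nonneg (by linarith) _)
      _ ≤ (2 ^ (2 * A2 / (2 + D)) * (c⁻¹ + 1) ^ A2 +
            (1 + (c * K₁) ^ ((2 + D) / D)) ^ (2 * A2 / (2 + D))) *
          ((1 + |z.1 - z'.1| / r) ^ (-(α - A2)) *
            (1 + |z.2 - z'.2| / (r * M)) ^ (-(β + 2 * A2 / (2 + D)))) := hkey
      _ = Bconst * ((1 + |z.1 - z'.1| / r) ^ (-(α - A2)) *
          (1 + |z.2 - z'.2| / (r * M)) ^ (-(β + 2 * A2 / (2 + D)))) := by rw [hBdef]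
  -- the integral computation
  have hcont1 : Continuous fun x : ℝ =>
      ENNReal.ofReal (Bconst * (1 + |x - z'.1| / r) ^ (-(α - A2))) :=
    ENNReal.continuous_ofReal.comp (continuous_const.mul (cont_onepow hr))
  have hcont2 : Continuous fun y : ℝ =>
      ENNReal.ofReal ((1 + |y - z'.2| / (r * M)) ^ (-(β + 2 * A2 / (2 + D)))) :=
    ENNReal.continuous_ofReal.comp (cont_onepow hrM)
  calc (∫⁻ z : ℝ × ℝ, ENNReal.ofReal
          ((1 + distStar V z z' / r) ^ (-α) * (1 + grushinWeight V r z z') ^ (-β)))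
      ≤ ∫⁻ z : ℝ × ℝ,
          ENNReal.ofReal (Bconst * (1 + |z.1 - z'.1| / r) ^ (-(α - A2))) *
          ENNReal.ofReal ((1 + |z.2 - z'.2| / (r * M)) ^ (-(β + 2 * A2 / (2 + D)))) := by
        refine lintegral_mono fun z => ?_
        rw [← ENNReal.ofReal_mul (by positivity)]
        refine ENNReal.ofReal_le_ofReal ?_
        calc (1 + distStar V z z' / r) ^ (-α) * (1 + grushinWeight V r z z') ^ (-β)
            ≤ Bconst * ((1 + |z.1 - z'.1| / r) ^ (-(α - A2)) *
                (1 + |z.2 - z'.2| / (r * M)) ^ (-(β + 2 * A2 / (2 + D)))) := hpt z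
          _ = Bconst * (1 + |z.1 - z'.1| / r) ^ (-(α - A2)) *
                (1 + |z.2 - z'.2| / (r * M)) ^ (-(β + 2 * A2 / (2 + D))) := by ring
    _ = (∫⁻ x : ℝ, ENNReal.ofReal (Bconst * (1 + |x - z'.1| / r) ^ (-(α - A2)))) *
        (∫⁻ y : ℝ, ENNReal.ofReal ((1 + |y - z'.2| / (r * M)) ^ (-(β + 2 * A2 / (2 + D))))) := by
        rw [MeasureTheory.Measure.volume_eq_prod]
        exact MeasureTheory.lintegral_prod_mul hcont1.measurable.aemeasurable hcont2.measurable.aemeasurable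
    _ = (ENNReal.ofReal Bconst * (ENNReal.ofReal r * ENNReal.ofReal Jα)) *
        (ENNReal.ofReal (r * M) * ENNReal.ofReal Jq) := by
        congr 1
        · simp_rw [ENNReal.ofReal_mul hB0]
          rw [lintegral_const_mul' _ _ ENNReal.ofReal_ne_top,
            lint_one_add hα'1 hr z'.1, hJαdef]
        · rw [lint_one_add hq'1 hrM z'.2, hJqdef]
    _ = ENNReal.ofReal ((Bconst * (r * Jα)) * ((r * M) * Jq)) := by
        rw [← ENNReal.ofReal_mul hrM.le, ← ENNReal.ofReal_mul hr.le,
          ← ENNReal.ofReal_mul hB0,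
          ← ENNReal.ofReal_mul (mul_nonneg hB0 (mul_nonneg hr.le hJα0))]
    _ ≤ ENNReal.ofReal (max 1 (Bconst * Jα * Jq) * r ^ 2 * M) := by
        refine ENNReal.ofReal_le_ofReal ?_
        have h1 : (Bconst * (r * Jα)) * ((r * M) * Jq) = (Bconst * Jα * Jq) * (r ^ 2 * M) := by
          ring
        have h2 : (Bconst * Jα * Jq) * (r ^ 2 * M) ≤ max 1 (Bconst * Jα * Jq) * (r ^ 2 * M) :=
          mul_le_mul_of_nonneg_right (le_max_right _ _) (by positivity)
        rw [h1]
        calc (Bconst * Jα * Jq) * (r ^ 2 * M) ≤ max 1 (Bconst * Jα * Jq) * (r ^ 2 * M) := h2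
          _ = max 1 (Bconst * Jα * Jq) * r ^ 2 * M := by ring
end

section
/- Let V : (0,∞) → ℝ be continuous and strictly increasing, w : (0,∞) → ℝ continuous, and u ∈ C²((0,∞);ℝ) a solution of −u″ + Vu = w on (0,∞) with limsup_{x→+∞}|u(x)| < +∞. Let 0 ≤ A < B be values of V and let x_B ∈ (0,∞) be the unique point with V(x_B) = B. Then for every γ ∈ [0,1) there exists C = C(γ), independent of V, w, u, A, B, such that ∫_{{V>B}} exp(2γ∫_{x_B}^x V^{1/2}) V(x)u(x)² dx ≤ C [ ∫_{{V>B}} exp(2γ∫_{x_B}^x V^{1/2}) w(x)²/V(x) dx + ∫_{{A<V<B}} w(x)²/V(x) dx + |{A<V<B}|^{−2} ∫_{{A<V<B}} u(x)² dx ], where the integrals take values in [0,+∞]. -/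
open MeasureTheory Filter Set

private lemma young_ptwise {κ V u w f : ℝ} (hκ : 0 < κ) (hV : 0 < V) :
    w * (f ^ 2 * u) ≤ κ/4*(V * f ^ 2 * u ^ 2) + 1/κ*(f ^ 2 * w ^ 2 / V) := by
  have key : κ/4*(V * f ^ 2 * u ^ 2) + 1/κ*(f ^ 2 * w ^ 2 / V) - w * (f ^ 2 * u)
      = f ^ 2 / (4*κ*V) * (κ*(V*u) - 2*w) ^ 2 := by
    field_simp
    ring
  have h0 : 0 ≤ f ^ 2 / (4*κ*V) * (κ*(V*u) - 2*w) ^ 2 := by positivity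
  linarith

private lemma piece {V w u u' u'' f f' G : ℝ → ℝ} {κ a b : ℝ}
    (hκ : 0 < κ) (ha : 0 < a) (hab : a ≤ b)
    (hu : ∀ x ∈ Ioi (0:ℝ), HasDerivAt u (u' x) x)
    (hu' : ∀ x ∈ Ioi (0:ℝ), HasDerivAt u' (u'' x) x)
    (heq : ∀ x ∈ Ioi (0:ℝ), -u'' x + V x * u x = w x)
    (hVc : ContinuousOn V (Icc a b)) (hu''c : ContinuousOn u'' (Icc a b))
    (hf : ∀ x ∈ Icc a b, HasDerivAt f (f' x) x)
    (hf'c : ContinuousOn f' (Icc a b)) (hGc : ContinuousOn G (Icc a b))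
    (hWint : IntervalIntegrable (fun x => f x ^ 2 * w x ^ 2 / V x) volume a b)
    (hYoung : ∀ x ∈ Icc a b,
      w x * (f x ^ 2 * u x) ≤ κ/4*(V x * f x ^ 2 * u x ^ 2) + 1/κ*(f x ^ 2 * w x ^ 2 / V x))
    (hGrow : ∀ x ∈ Icc a b,
      f' x ^ 2 * u x ^ 2 ≤ (1 - 3*κ/4)*(V x * f x ^ 2 * u x ^ 2) + G x) :
    κ/2 * ∫ x in a..b, V x * f x ^ 2 * u x ^ 2 ≤
      (u' b * (f b ^ 2 * u b) - u' a * (f a ^ 2 * u a)) +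
        ∫ x in a..b, (1/κ * (f x ^ 2 * w x ^ 2 / V x) + G x) := by
  have hsub : Icc a b ⊆ Ioi (0:ℝ) := fun x hx => lt_of_lt_of_le ha hx.1
  have huIcc : uIcc a b = Icc a b := uIcc_of_le hab
  have huc : ContinuousOn u (Icc a b) := fun x hx =>
    ((hu x (hsub hx)).continuousAt).continuousWithinAt
  have hu'c : ContinuousOn u' (Icc a b) := fun x hx =>
    ((hu' x (hsub hx)).continuousAt).continuousWithinAt
  have hfc : ContinuousOn f (Icc a b) := fun x hx =>
    ((hf x hx).continuousAt).continuousWithinAt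
  set DF : ℝ → ℝ := fun x =>
    u'' x * (f x ^ 2 * u x) + u' x * ((2 * f x * f' x) * u x + f x ^ 2 * u' x) with hDFdef
  have hDFc : ContinuousOn DF (Icc a b) := by
    apply ContinuousOn.add
    · exact hu''c.mul ((hfc.pow 2).mul huc)
    · exact hu'c.mul
        ((((continuousOn_const.mul hfc).mul hf'c).mul huc).add ((hfc.pow 2).mul hu'c))
  have hDFi : IntervalIntegrable DF volume a b := (huIcc ▸ hDFc).intervalIntegrable
  have hFTC : ∫ x in a..b, DF x = u' b * (f b ^ 2 * u b) - u' a * (f a ^ 2 * u a) := by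
    apply intervalIntegral.integral_eq_sub_of_hasDerivAt
    · intro x hx
      rw [huIcc] at hx
      have h2 : HasDerivAt (fun y => f y ^ 2 * u y)
          ((2 * f x * f' x) * u x + f x ^ 2 * u' x) x := by
        have h := ((hf x hx).fun_pow 2).fun_mul (hu x (hsub hx))
        refine h.congr_deriv ?_
        ring
      exact (hu' x (hsub hx)).mul h2
    · exact hDFi
  have hpt : ∀ x ∈ Icc a b,
      κ/2 * (V x * f x ^ 2 * u x ^ 2) - (1/κ * (f x ^ 2 * w x ^ 2 / V x) + G x) ≤ DF x := by
    intro x hx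
    have hx' : x ∈ Ioi (0:ℝ) := hsub hx
    have heqx : u'' x = V x * u x - w x := by linarith [heq x hx']
    have hDFeq : DF x = V x * f x ^ 2 * u x ^ 2 - w x * (f x ^ 2 * u x)
        + (f' x * u x + f x * u' x) ^ 2 - f' x ^ 2 * u x ^ 2 := by
      simp only [hDFdef]; rw [heqx]; ring
    rw [hDFeq]
    linarith [sq_nonneg (f' x * u x + f x * u' x), hYoung x hx, hGrow x hx]
  have hVfu : IntervalIntegrable (fun x => κ/2 * (V x * f x ^ 2 * u x ^ 2)) volume a b := by
    apply ContinuousOn.intervalIntegrable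
    rw [huIcc]
    exact continuousOn_const.mul ((hVc.mul (hfc.pow 2)).mul (huc.pow 2))
  have hW2 : IntervalIntegrable (fun x => 1/κ * (f x ^ 2 * w x ^ 2 / V x) + G x) volume a b :=
    (hWint.const_mul (1/κ)).add ((huIcc ▸ hGc).intervalIntegrable)
  have hmono := intervalIntegral.integral_mono_on hab (hVfu.sub hW2) hDFi hpt
  rw [intervalIntegral.integral_sub hVfu hW2, intervalIntegral.integral_const_mul] at hmono
  linarith [hmono, hFTC]

private lemma lintegral_Ioi_le_of_forall {g : ℝ → ENNReal} {a : ℝ} {K : ENNReal}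
    (hg : ∀ n : ℕ, AEMeasurable g (volume.restrict (Ioc a (a + n))))
    (h : ∀ n : ℕ, ∫⁻ x in Ioc a (a + n), g x ≤ K) :
    ∫⁻ x in Ioi a, g x ≤ K := by
  have hind : ∀ x, (Ioi a).indicator g x = ⨆ n : ℕ, (Ioc a (a + n)).indicator g x := by
    intro x
    by_cases hx : a < x
    · obtain ⟨n, hn⟩ := exists_nat_ge (x - a)
      apply le_antisymm
      · rw [indicator_of_mem (show x ∈ Ioi a from hx)]
        refine le_trans ?_ (le_iSup _ n)
        rw [indicator_of_mem (show x ∈ Ioc a (a + (n:ℝ)) from ⟨hx, by linarith⟩)]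
      · exact iSup_le fun n =>
          Set.indicator_le_indicator_of_subset Ioc_subset_Ioi_self (fun _ => zero_le) x
    · have h1 : x ∉ Ioi a := hx
      rw [indicator_of_notMem h1]
      symm
      simp only [ENNReal.iSup_eq_zero]
      intro n
      exact indicator_of_notMem (fun hc => hx hc.1) _
  calc ∫⁻ x in Ioi a, g x = ∫⁻ x, (Ioi a).indicator g x := (lintegral_indicator measurableSet_Ioi g).symm
    _ = ∫⁻ x, ⨆ n : ℕ, (Ioc a (a + n)).indicator g x := by simp_rw [hind]
    _ = ⨆ n : ℕ, ∫⁻ x, (Ioc a (a + n)).indicator g x := by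
        apply lintegral_iSup'
        · exact fun n => (aemeasurable_indicator_iff measurableSet_Ioc).mpr (hg n)
        · refine ae_of_all _ fun x m n hmn => ?_
          exact Set.indicator_le_indicator_of_subset
            (Ioc_subset_Ioc_right (by exact_mod_cast add_le_add_right (Nat.cast_le.mpr hmn) a))
            (fun _ => zero_le) x
    _ ≤ K := iSup_le fun n => by
        rw [lintegral_indicator measurableSet_Ioc]; exact h n

set_option maxHeartbeats 2000000 in
/-- Agmon's estimate for a strictly increasing potential.  Let `V` be continuous and strictly
increasing on `(0,∞)`, `w` continuous, and `u ∈ C²((0,∞))` a solution of `−u″ + Vu = w` with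
`limsup_{x→+∞}|u| < ∞`.  Let `0 ≤ A < B` be values of `V` and `x_B` the point with
`V(x_B) = B`.  Then for every `γ ∈ [0,1)` there is `C = C(γ)` with
`∫_{V>B} e^{2γ∫_{x_B}^x √V} V u² ≤ C [ ∫_{V>B} e^{2γ∫_{x_B}^x √V} w²/V + ∫_{A<V<B} w²/V
  + |{A<V<B}|^{−2} ∫_{A<V<B} u² ]`. -/
theorem agmon_increasing (γ : ℝ) (hγ0 : 0 ≤ γ) (hγ1 : γ < 1) :
    ∃ C : ℝ, 0 < C ∧
      ∀ V w u u' u'' : ℝ → ℝ, ∀ A B xB : ℝ,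
        ContinuousOn V (Ioi 0) → StrictMonoOn V (Ioi 0) →
        ContinuousOn w (Ioi 0) →
        (∀ x ∈ Ioi (0 : ℝ), HasDerivAt u (u' x) x) →
        (∀ x ∈ Ioi (0 : ℝ), HasDerivAt u' (u'' x) x) →
        ContinuousOn u'' (Ioi 0) →
        (∀ x ∈ Ioi (0 : ℝ), -u'' x + V x * u x = w x) →
        (∃ M : ℝ, ∀ᶠ x in atTop, |u x| ≤ M) →
        0 ≤ A → A < B →
        (∃ xA ∈ Ioi (0 : ℝ), V xA = A) → xB ∈ Ioi (0 : ℝ) → V xB = B →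
        (∫⁻ x in {x : ℝ | 0 < x ∧ B < V x},
            ENNReal.ofReal
              (Real.exp (2 * γ * ∫ t in xB..x, Real.sqrt (V t)) * V x * u x ^ 2)) ≤
          ENNReal.ofReal C *
            ((∫⁻ x in {x : ℝ | 0 < x ∧ B < V x},
                ENNReal.ofReal
                  (Real.exp (2 * γ * ∫ t in xB..x, Real.sqrt (V t)) * w x ^ 2 / V x)) +
              (∫⁻ x in {x : ℝ | 0 < x ∧ A < V x ∧ V x < B},
                ENNReal.ofReal (w x ^ 2 / V x)) +
              (volume {x : ℝ | 0 < x ∧ A < V x ∧ V x < B} ^ 2)⁻¹ *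
                ∫⁻ x in {x : ℝ | 0 < x ∧ A < V x ∧ V x < B},
                  ENNReal.ofReal (u x ^ 2)) := by
  set κ := 1 - γ ^ 2 with hκdef
  have hκ : 0 < κ := by rw [hκdef]; nlinarith only [hγ0, hγ1]
  have hκ1 : κ ≤ 1 := by rw [hκdef]; nlinarith only [sq_nonneg γ]
  have hγκ : γ ^ 2 = 1 - κ := by rw [hκdef]; ring
  clear_value κ
  have hκinv : (0:ℝ) ≤ 1/κ := (one_div_pos.mpr hκ).le
  have h2κ : (0:ℝ) ≤ 2/κ := (div_pos two_pos hκ).le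
  have hκhalf : (0:ℝ) ≤ κ/2 := (half_pos hκ).le
  have hCκ : (0:ℝ) < 10/κ^2 := div_pos (by norm_num) (by positivity)
  refine ⟨10 / κ ^ 2, hCκ, ?_⟩
  intro V w u u' u'' A B xB hVc hVm hwc hu hu' hu''c heq hbound hA hAB hxAe hxB hVxB
  obtain ⟨xA, hxA0, hVxA⟩ := hxAe
  have hxA0' : (0:ℝ) < xA := hxA0
  have hxB0 : (0:ℝ) < xB := hxB
  have hB0 : 0 < B := lt_of_le_of_lt hA hAB
  have hmono := hVm.monotoneOn
  have hxAB : xA < xB := by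
    rw [← hVxA, ← hVxB] at hAB
    exact (hVm.lt_iff_lt hxA0 hxB).mp hAB
  set L := xB - xA with hLdef
  have hL : 0 < L := by rw [hLdef]; linarith only [hxAB]
  have hLinv : (0:ℝ) ≤ 1/L := (one_div_pos.mpr hL).le
  have h14κ : (0:ℝ) ≤ (1 + 4/κ)/L^2 :=
    div_nonneg (by linarith only [div_pos (by norm_num : (0:ℝ) < 4) hκ]) (sq_nonneg L)
  -- monotonicity facts for V
  have hVgeA : ∀ x, xA ≤ x → 0 ≤ V x := by
    intro x hx
    have h0 : x ∈ Ioi (0:ℝ) := lt_of_lt_of_le hxA0' hx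
    have := hmono hxA0 h0 hx
    rw [hVxA] at this
    linarith only [this, hA]
  have hVgtA : ∀ x, xA < x → 0 < V x := by
    intro x hx
    have h0 : x ∈ Ioi (0:ℝ) := lt_trans hxA0' hx
    have := hVm hxA0 h0 hx
    rw [hVxA] at this
    linarith only [this, hA]
  have hVB : ∀ x, xB ≤ x → B ≤ V x := by
    intro x hx
    have h0 : x ∈ Ioi (0:ℝ) := lt_of_lt_of_le hxB0 hx
    have := hmono hxB h0 hx
    rwa [hVxB] at this
  have hVposB : ∀ x, xB ≤ x → 0 < V x := fun x hx => lt_of_lt_of_le hB0 (hVB x hx)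
  -- sets
  have hSout : {x : ℝ | 0 < x ∧ B < V x} = Ioi xB := by
    ext x
    simp only [mem_setOf_eq, mem_Ioi]
    constructor
    · rintro ⟨h0, hBx⟩
      by_contra hc
      push_neg at hc
      have := hmono (show x ∈ Ioi (0:ℝ) from h0) hxB hc
      rw [hVxB] at this
      linarith only [this, hBx]
    · intro hx
      have h0 : (0:ℝ) < x := lt_trans hxB0 hx
      have := hVm hxB (show x ∈ Ioi (0:ℝ) from h0) hx
      rw [hVxB] at this
      exact ⟨h0, this⟩
  have hSmid : {x : ℝ | 0 < x ∧ A < V x ∧ V x < B} = Ioo xA xB := by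
    ext x
    simp only [mem_setOf_eq, mem_Ioo]
    constructor
    · rintro ⟨h0, hAx, hxB'⟩
      constructor
      · by_contra hc
        push_neg at hc
        have := hmono (show x ∈ Ioi (0:ℝ) from h0) hxA0 hc
        rw [hVxA] at this
        linarith only [this, hAx]
      · by_contra hc
        push_neg at hc
        have := hmono hxB (show x ∈ Ioi (0:ℝ) from h0) hc
        rw [hVxB] at this
        linarith only [this, hxB']
    · rintro ⟨h1, h2⟩
      have h0 : (0:ℝ) < x := lt_trans hxA0' h1
      have ha := hVm hxA0 (show x ∈ Ioi (0:ℝ) from h0) h1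
      have hb := hVm (show x ∈ Ioi (0:ℝ) from h0) hxB h2
      rw [hVxA] at ha
      rw [hVxB] at hb
      exact ⟨h0, ha, hb⟩
  rw [hSout, hSmid]
  -- the weight function Φ
  set Φ : ℝ → ℝ := fun x => ∫ t in xB..x, Real.sqrt (V t) with hΦdef
  have hsqc : ContinuousOn (fun t => Real.sqrt (V t)) (Ioi 0) :=
    Real.continuous_sqrt.comp_continuousOn hVc
  have hsqi : ∀ p q : ℝ, 0 < p → 0 < q →
      IntervalIntegrable (fun t => Real.sqrt (V t)) volume p q := by
    intro p q hp hq
    apply ContinuousOn.intervalIntegrable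
    apply hsqc.mono
    intro x hx
    exact lt_of_lt_of_le (lt_min hp hq) hx.1
  have hΦd : ∀ x ∈ Ioi (0:ℝ), HasDerivAt Φ (Real.sqrt (V x)) x := by
    intro x hx
    exact intervalIntegral.integral_hasDerivAt_right (hsqi xB x hxB0 hx)
      (ContinuousOn.stronglyMeasurableAtFilter isOpen_Ioi hsqc x hx)
      (hsqc.continuousAt (isOpen_Ioi.mem_nhds hx))
  have hΦc : ContinuousOn Φ (Ioi 0) := fun x hx =>
    (hΦd x hx).continuousAt.continuousWithinAt
  have hΦ0 : Φ xB = 0 := intervalIntegral.integral_same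
  have hΦdiff : ∀ p q : ℝ, 0 < p → 0 < q → Φ q - Φ p = ∫ t in p..q, Real.sqrt (V t) := by
    intro p q hp hq
    have h := intervalIntegral.integral_add_adjacent_intervals (hsqi xB p hxB0 hp) (hsqi p q hp hq)
    rw [hΦdef]
    simp only
    linarith only [h]
  have hΦmono : ∀ p q : ℝ, 0 < p → p ≤ q → Φ p ≤ Φ q := by
    intro p q hp hpq
    have hq : 0 < q := lt_of_lt_of_le hp hpq
    have h := hΦdiff p q hp hq
    have h2 : 0 ≤ ∫ t in p..q, Real.sqrt (V t) :=
      intervalIntegral.integral_nonneg hpq (fun t _ => Real.sqrt_nonneg _)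
    linarith only [h, h2]
  have hΦneg : ∀ x, 0 < x → x ≤ xB → Φ x ≤ 0 := by
    intro x h0 hxb
    have := hΦmono x xB h0 hxb
    rw [hΦ0] at this
    exact this
  have hexp2 : ∀ s : ℝ, Real.exp (γ * s) ^ 2 = Real.exp (2 * γ * s) := by
    intro s
    rw [sq, ← Real.exp_add]
    ring_nf
  have hexpΦle1 : ∀ x, 0 < x → x ≤ xB → Real.exp (γ * Φ x) ≤ 1 := by
    intro x h0 hxb
    rw [Real.exp_le_one_iff]
    have := hΦneg x h0 hxb
    nlinarith only [this, hγ0]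
  -- bound on u at infinity
  obtain ⟨M, hM⟩ := hbound
  rw [eventually_atTop] at hM
  obtain ⟨x₀, hx₀⟩ := hM
  set M' := |M| with hM'def
  have hM' : ∀ x, x₀ ≤ x → u x ^ 2 ≤ M' ^ 2 := by
    intro x hx
    have h1 : |u x| ≤ M' := (hx₀ x hx).trans (le_abs_self M)
    nlinarith only [h1, abs_nonneg (u x), sq_abs (u x)]
  -- names for the three RHS integrals
  set Lout := ∫⁻ x in Ioi xB,
      ENNReal.ofReal (Real.exp (2 * γ * ∫ t in xB..x, Real.sqrt (V t)) * w x ^ 2 / V x)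
    with hLoutdef
  set Lmid := ∫⁻ x in Ioo xA xB, ENNReal.ofReal (w x ^ 2 / V x) with hLmiddef
  set Lu := ∫⁻ x in Ioo xA xB, ENNReal.ofReal (u x ^ 2) with hLudef
  have hCne : ENNReal.ofReal (10 / κ ^ 2) ≠ 0 :=
    (ENNReal.ofReal_pos.mpr hCκ).ne'
  by_cases hfin1 : Lout = ⊤
  · rw [hfin1, top_add, top_add, ENNReal.mul_top hCne]
    exact le_top
  by_cases hfin2 : Lmid = ⊤
  · rw [hfin2, add_top, top_add, ENNReal.mul_top hCne]
    exact le_top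
  -- basic continuity
  have huc : ContinuousOn u (Ioi 0) := fun x hx => (hu x hx).continuousAt.continuousWithinAt
  have hu'c : ContinuousOn u' (Ioi 0) := fun x hx => (hu' x hx).continuousAt.continuousWithinAt
  have hexpΦc : ContinuousOn (fun x => Real.exp (γ * Φ x)) (Ioi 0) :=
    Real.continuous_exp.comp_continuousOn (continuousOn_const.mul hΦc)
  have hIciB : Ici xB ⊆ Ioi (0:ℝ) := fun x hx => lt_of_lt_of_le hxB0 hx
  have hIccAB : Icc xA xB ⊆ Ioi (0:ℝ) := fun x hx => lt_of_lt_of_le hxA0' hx.1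
  have hIooAB : Ioo xA xB ⊆ Ioi (0:ℝ) := fun x hx => lt_trans hxA0' hx.1
  -- continuity of the outer weight integrand on Ici xB
  have houtc : ContinuousOn (fun x => Real.exp (2 * γ * Φ x) * w x ^ 2 / V x) (Ici xB) := by
    apply ContinuousOn.div
    · exact (Real.continuous_exp.comp_continuousOn
        (continuousOn_const.mul (hΦc.mono hIciB))).mul ((hwc.mono hIciB).pow 2)
    · exact hVc.mono hIciB
    · exact fun x hx => (hVposB x hx).ne'
  -- integrability of w^2/V on the middle interval
  have hmidc : ContinuousOn (fun x => w x ^ 2 / V x) (Ioo xA xB) := by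
    apply ContinuousOn.div
    · exact (hwc.mono hIooAB).pow 2
    · exact hVc.mono hIooAB
    · exact fun x hx => (hVgtA x hx.1).ne'
  have hmidnn : 0 ≤ᵐ[volume.restrict (Ioo xA xB)] fun x => w x ^ 2 / V x := by
    refine (ae_restrict_iff' measurableSet_Ioo).mpr (ae_of_all _ fun x hx => ?_)
    exact div_nonneg (sq_nonneg _) (hVgtA x hx.1).le
  have hWmInt : IntegrableOn (fun x => w x ^ 2 / V x) (Ioo xA xB) volume := by
    constructor
    · exact hmidc.aestronglyMeasurable measurableSet_Ioo
    · rw [hasFiniteIntegral_iff_ofReal hmidnn]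
      exact lt_of_le_of_ne le_top hfin2
  -- integrability of the outer weight integrand
  have houtnn : 0 ≤ᵐ[volume.restrict (Ioi xB)]
      fun x => Real.exp (2 * γ * Φ x) * w x ^ 2 / V x := by
    refine (ae_restrict_iff' measurableSet_Ioi).mpr (ae_of_all _ fun x hx => ?_)
    exact div_nonneg (mul_nonneg (Real.exp_pos _).le (sq_nonneg _)) (hVposB x (le_of_lt hx)).le
  have hWoInt : IntegrableOn (fun x => Real.exp (2 * γ * Φ x) * w x ^ 2 / V x) (Ioi xB)
      volume := by
    constructor
    · exact (houtc.mono Ioi_subset_Ici_self).aestronglyMeasurable measurableSet_Ioi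
    · rw [hasFiniteIntegral_iff_ofReal houtnn]
      exact lt_of_le_of_ne le_top hfin1
  -- real versions of the three integrals
  set Wo := ∫ x in Ioi xB, Real.exp (2 * γ * Φ x) * w x ^ 2 / V x with hWodef
  set Wm := ∫ x in Ioo xA xB, w x ^ 2 / V x with hWmdef
  set U := ∫ x in Ioo xA xB, u x ^ 2 with hUdef
  have hUInt : IntegrableOn (fun x => u x ^ 2) (Ioo xA xB) volume :=
    (((huc.mono hIccAB).pow 2).integrableOn_Icc).mono_set Ioo_subset_Icc_self
  have hWo0 : 0 ≤ Wo := by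
    rw [hWodef]
    exact setIntegral_nonneg measurableSet_Ioi fun x hx =>
      div_nonneg (mul_nonneg (Real.exp_pos _).le (sq_nonneg _)) (hVposB x (le_of_lt hx)).le
  have hWm0 : 0 ≤ Wm := by
    rw [hWmdef]
    exact setIntegral_nonneg measurableSet_Ioo fun x hx =>
      div_nonneg (sq_nonneg _) (hVgtA x hx.1).le
  have hU0 : 0 ≤ U := by
    rw [hUdef]
    exact setIntegral_nonneg measurableSet_Ioo fun x _ => sq_nonneg _
  clear_value Wo Wm U
  -- the two global cutoff-independent pieces
  set f₁ : ℝ → ℝ := fun x => (x - xA) / L * Real.exp (γ * Φ x) with hf₁def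
  set f₁' : ℝ → ℝ := fun x =>
      1 / L * Real.exp (γ * Φ x) + (x - xA) / L * (γ * Real.sqrt (V x)) * Real.exp (γ * Φ x)
    with hf₁'def
  set f₂ : ℝ → ℝ := fun x => Real.exp (γ * Φ x) with hf₂def
  set f₂' : ℝ → ℝ := fun x => γ * Real.sqrt (V x) * Real.exp (γ * Φ x) with hf₂'def
  have hf₁le : ∀ x ∈ Icc xA xB, f₁ x ^ 2 ≤ 1 := by
    intro x hx
    have hs0 : 0 ≤ (x - xA) / L := div_nonneg (by linarith only [hx.1]) hL.le
    have hs1 : (x - xA) / L ≤ 1 := by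
      rw [div_le_one hL]
      rw [hLdef]
      linarith only [hx.2]
    have he1 : Real.exp (γ * Φ x) ≤ 1 := hexpΦle1 x (hIccAB hx) hx.2
    have he0 : 0 < Real.exp (γ * Φ x) := Real.exp_pos _
    rw [hf₁def]
    simp only
    nlinarith only [hs0, he0, he1, hs1, mul_nonneg hs0 he0.le, mul_le_one₀ hs1 he0.le he1]
  -- integrability of f₁^2 w^2 / V on the middle interval
  have hf₁c : ContinuousOn f₁ (Ioi 0) :=
    ((continuousOn_id.sub continuousOn_const).div_const L).mul hexpΦc
  have hW₁Ioo : IntegrableOn (fun x => f₁ x ^ 2 * w x ^ 2 / V x) (Ioo xA xB) volume := by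
    apply Integrable.mono' hWmInt
    · apply ContinuousOn.aestronglyMeasurable _ measurableSet_Ioo
      apply ContinuousOn.div
      · exact ((hf₁c.mono hIooAB).pow 2).mul ((hwc.mono hIooAB).pow 2)
      · exact hVc.mono hIooAB
      · exact fun x hx => (hVgtA x hx.1).ne'
    · rw [ae_restrict_iff' measurableSet_Ioo]
      refine ae_of_all _ fun x hx => ?_
      have hV0 : 0 < V x := hVgtA x hx.1
      have h1 : f₁ x ^ 2 * w x ^ 2 / V x ≤ w x ^ 2 / V x := by
        rw [mul_div_assoc]
        have := hf₁le x ⟨hx.1.le, hx.2.le⟩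
        nlinarith only [this, div_nonneg (sq_nonneg (w x)) hV0.le, sq_nonneg (f₁ x)]
      have h0 : 0 ≤ f₁ x ^ 2 * w x ^ 2 / V x :=
        div_nonneg (mul_nonneg (sq_nonneg _) (sq_nonneg _)) hV0.le
      rw [Real.norm_eq_abs, abs_of_nonneg h0]
      exact h1
  have hW₁ : IntervalIntegrable (fun x => f₁ x ^ 2 * w x ^ 2 / V x) volume xA xB :=
    (intervalIntegrable_iff_integrableOn_Ioc_of_le hxAB.le).mpr
      ((integrableOn_Ioc_iff_integrableOn_Ioo).mpr hW₁Ioo)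
  -- derivative facts for f₁ f₂
  have hf₁d : ∀ x ∈ Ioi (0:ℝ), HasDerivAt f₁ (f₁' x) x := by
    intro x hx
    have h := (((hasDerivAt_id x).sub_const xA).div_const L).fun_mul
      (((hΦd x hx).const_mul γ).exp)
    rw [hf₁def, hf₁'def]
    refine h.congr_deriv ?_
    simp only [id_eq]
    ring
  have hf₂d : ∀ x ∈ Ioi (0:ℝ), HasDerivAt f₂ (f₂' x) x := by
    intro x hx
    have h := ((hΦd x hx).const_mul γ).exp
    rw [hf₂def, hf₂'def]
    convert h using 1
    ring
  have hf₁'c : ContinuousOn f₁' (Ioi 0) := by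
    rw [hf₁'def]
    exact (continuousOn_const.mul hexpΦc).add
      ((((continuousOn_id.sub continuousOn_const).div_const L).mul
        (continuousOn_const.mul hsqc)).mul hexpΦc)
  have hf₂'c : ContinuousOn f₂' (Ioi 0) := (continuousOn_const.mul hsqc).mul hexpΦc
  -- helpers for pieces to the right of xB
  have hsubB : ∀ a b : ℝ, xB ≤ a → Icc a b ⊆ Ioi (0:ℝ) :=
    fun a b ha x hx => lt_of_lt_of_le hxB0 (le_trans ha hx.1)
  have hWIcc : ∀ a b : ℝ, xB ≤ a → a ≤ b → ∀ f : ℝ → ℝ, ContinuousOn f (Icc a b) →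
      IntervalIntegrable (fun x => f x ^ 2 * w x ^ 2 / V x) volume a b := by
    intro a b ha hab f hf
    apply ContinuousOn.intervalIntegrable
    rw [uIcc_of_le hab]
    have hsub := hsubB a b ha
    exact ((hf.pow 2).mul ((hwc.mono hsub).pow 2)).div (hVc.mono hsub)
      (fun x hx => (hVposB x (le_trans ha hx.1)).ne')
  have hYIcc : ∀ a b : ℝ, xB ≤ a → ∀ f : ℝ → ℝ, ∀ x ∈ Icc a b,
      w x * (f x ^ 2 * u x) ≤ κ/4*(V x * f x ^ 2 * u x ^ 2) + 1/κ*(f x ^ 2 * w x ^ 2 / V x) :=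
    fun a b ha f x hx => young_ptwise hκ (hVposB x (le_trans ha hx.1))
  -- the key finite-interval estimate
  set K := 2/κ^2 * Wm + 6/κ^2 * Wo + 2/κ * ((1 + 4/κ)/L^2) * U with hKdef
  clear_value K
  have hmain : ∀ T, xB ≤ T → (∫ x in xB..T, V x * f₂ x ^ 2 * u x ^ 2) ≤ K := by
    intro T hT
    have hT0 : (0:ℝ) < T := lt_of_lt_of_le hxB0 hT
    apply le_of_forall_pos_le_add
    intro ε hε
    set c : ℝ := 2/κ * (Real.exp (γ * Φ T) ^ 2 * M' ^ 2) with hcdef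
    have hc0 : 0 ≤ c := by
      rw [hcdef]
      exact mul_nonneg h2κ (by positivity)
    set R := max (max T x₀) (c / ε) with hRdef
    have hTR : T ≤ R := (le_max_left T x₀).trans (le_max_left _ _)
    have hx₀R : x₀ ≤ R := (le_max_right T x₀).trans (le_max_left _ _)
    have hR0 : (0:ℝ) < R := lt_of_lt_of_le hT0 hTR
    have hxBR : xB ≤ R := hT.trans hTR
    have hR2 : R ≤ 2 * R := by linarith only [hR0]
    have hcR : c / R ≤ ε := by
      rw [div_le_iff₀ hR0]
      have h1 : c / ε ≤ R := le_max_right _ _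
      have h2 : c = ε * (c / ε) := by field_simp
      linarith only [h2, mul_le_mul_of_nonneg_left h1 hε.le]
    clear_value c R
    -- pieces 3 and 4
    set eT : ℝ := Real.exp (γ * Φ T) with heTdef
    have heT0 : 0 < eT := Real.exp_pos _
    set f₃ : ℝ → ℝ := fun _ => eT with hf₃def
    set f₄ : ℝ → ℝ := fun x => (2 * R - x) / R * eT with hf₄def
    set f₄' : ℝ → ℝ := fun _ => -(1 / R) * eT with hf₄'def
    set G₁ : ℝ → ℝ := fun x => (1 + 4/κ)/L^2 * (Real.exp (γ * Φ x) ^ 2 * u x ^ 2) with hG₁def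
    set G₄ : ℝ → ℝ := fun x => (1/R)^2 * eT^2 * u x ^ 2 with hG₄def
    -- piece 1 : [xA, xB]
    have hP₁ : κ/2 * ∫ x in xA..xB, V x * f₁ x ^ 2 * u x ^ 2 ≤
        (u' xB * (f₁ xB ^ 2 * u xB) - u' xA * (f₁ xA ^ 2 * u xA)) +
          ∫ x in xA..xB, (1/κ * (f₁ x ^ 2 * w x ^ 2 / V x) + G₁ x) := by
      apply piece hκ hxA0' hxAB.le hu hu' heq (hVc.mono hIccAB) (hu''c.mono hIccAB)
        (fun x hx => hf₁d x (hIccAB hx)) (hf₁'c.mono hIccAB)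
        ((continuousOn_const.mul (((hexpΦc.mono hIccAB).pow 2).mul ((huc.mono hIccAB).pow 2))))
        hW₁
      · -- Young
        intro x hx
        rcases eq_or_lt_of_le hx.1 with heq' | hlt
        · have h0 : f₁ x = 0 := by
            rw [hf₁def]
            simp only
            rw [← heq']
            simp
          rw [h0]
          simp
        · exact young_ptwise hκ (hVgtA x hlt)
      · -- growth
        intro x hx
        have hV0 : 0 ≤ V x := hVgeA x hx.1
        set q : ℝ := Real.sqrt (V x) with hqdef
        have hq0 : 0 ≤ q := Real.sqrt_nonneg _
        have hVq : V x = q ^ 2 := (Real.sq_sqrt hV0).symm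
        set s : ℝ := (x - xA) / L with hsdef
        have hs0 : 0 ≤ s := div_nonneg (by linarith only [hx.1]) hL.le
        set e : ℝ := Real.exp (γ * Φ x) with hedef
        have he0 : 0 < e := Real.exp_pos _
        have he2 : 2*(s*(γ*q))*(1/L) ≤ κ/4*(s*q)^2 + 4/κ*(1/L)^2 := by
          have hq1 : 2*(s*(γ*q))*(1/L) ≤ 2*(s*q)*(1/L) := by
            have : s*(γ*q) ≤ s*q := by nlinarith only [hs0, hq0, hγ0, hγ1, mul_nonneg hs0 hq0]
            have h1L : 0 < 1/L := one_div_pos.mpr hL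
            nlinarith only [this, h1L]
          have h3 : κ/4*(s*q)^2 + 4/κ*(1/L)^2 - 2*(s*q)*(1/L) = (κ*(s*q) - 4*(1/L))^2/(4*κ) := by
            field_simp
            ring
          have h4 : 0 ≤ (κ*(s*q) - 4*(1/L))^2/(4*κ) :=
            div_nonneg (sq_nonneg _) (by linarith only [hκ])
          linarith only [hq1, h3, h4]
        have hkey : (1/L + s*(γ*q))^2 ≤ (1 - 3*κ/4)*(q^2*s^2) + (1 + 4/κ)*(1/L)^2 := by
          have hexpand : (1/L + s*(γ*q))^2 =
              (1/L)^2 + 2*(s*(γ*q))*(1/L) + s^2*γ^2*q^2 := by ring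
          have he3 : s^2*γ^2*q^2 = (1-κ)*(q^2*s^2) := by rw [hγκ]; ring
          nlinarith only [he2, hexpand, he3, mul_nonneg (mul_nonneg (sq_nonneg s) hκ.le) (sq_nonneg q)]
        have hgoal : f₁' x = (1/L)*e + s*(γ*q)*e := by rw [hf₁'def]
        have hf₁x : f₁ x = s * e := by rw [hf₁def]
        have hfinal : ((1/L)*e + s*(γ*q)*e)^2 * u x ^ 2 ≤
            (1 - 3*κ/4)*(V x*(s*e)^2*u x ^ 2) + (1 + 4/κ)/L^2 * (e^2 * u x ^ 2) := by
          calc ((1/L)*e + s*(γ*q)*e)^2 * u x ^ 2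
              = (1/L + s*(γ*q))^2 * (e^2 * u x ^ 2) := by ring
            _ ≤ ((1 - 3*κ/4)*(q^2*s^2) + (1 + 4/κ)*(1/L)^2) * (e^2 * u x ^ 2) := by
                exact mul_le_mul_of_nonneg_right hkey (by positivity)
            _ = (1 - 3*κ/4)*(q^2*(s*e)^2*u x ^ 2) + (1 + 4/κ)/L^2 * (e^2 * u x ^ 2) := by
                field_simp
            _ = (1 - 3*κ/4)*(V x*(s*e)^2*u x ^ 2) + (1 + 4/κ)/L^2 * (e^2 * u x ^ 2) := by
                rw [hVq]
        rw [hgoal, hf₁x]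
        exact hfinal
    -- piece 2 : [xB, T]
    have hIcc2 : Icc xB T ⊆ Ioi (0:ℝ) := hsubB xB T le_rfl
    have hP₂ : κ/2 * ∫ x in xB..T, V x * f₂ x ^ 2 * u x ^ 2 ≤
        (u' T * (f₂ T ^ 2 * u T) - u' xB * (f₂ xB ^ 2 * u xB)) +
          ∫ x in xB..T, (1/κ * (f₂ x ^ 2 * w x ^ 2 / V x) + (fun _ : ℝ => (0:ℝ)) x) := by
      apply piece hκ hxB0 hT hu hu' heq (hVc.mono hIcc2) (hu''c.mono hIcc2)
        (fun x hx => hf₂d x (hIcc2 hx)) (hf₂'c.mono hIcc2) continuousOn_const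
        (hWIcc xB T le_rfl hT f₂ (hexpΦc.mono hIcc2))
        (hYIcc xB T le_rfl f₂)
      intro x hx
      have hV0 : 0 < V x := hVposB x hx.1
      have hq : Real.sqrt (V x) ^ 2 = V x := Real.sq_sqrt hV0.le
      have hf2x : f₂ x = Real.exp (γ * Φ x) := by rw [hf₂def]
      have hf2x' : f₂' x = γ * Real.sqrt (V x) * Real.exp (γ * Φ x) := by rw [hf₂'def]
      rw [hf2x, hf2x']
      have hXnn : 0 ≤ V x * Real.exp (γ * Φ x) ^ 2 * u x ^ 2 := by positivity
      have hexpand : (γ * Real.sqrt (V x) * Real.exp (γ * Φ x)) ^ 2 * u x ^ 2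
          = γ ^ 2 * (V x * Real.exp (γ * Φ x) ^ 2 * u x ^ 2) := by
        rw [mul_pow, mul_pow, hq]; ring
      rw [hexpand, hγκ]
      simp only [add_zero]
      nlinarith only [hXnn, hκ]
    -- piece 3 : [T, R]
    have hIcc3 : Icc T R ⊆ Ioi (0:ℝ) := hsubB T R hT
    have hP₃ : κ/2 * ∫ x in T..R, V x * f₃ x ^ 2 * u x ^ 2 ≤
        (u' R * (f₃ R ^ 2 * u R) - u' T * (f₃ T ^ 2 * u T)) +
          ∫ x in T..R, (1/κ * (f₃ x ^ 2 * w x ^ 2 / V x) + (fun _ : ℝ => (0:ℝ)) x) := by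
      apply piece hκ hT0 hTR hu hu' heq (hVc.mono hIcc3) (hu''c.mono hIcc3)
        (fun x _ => hasDerivAt_const x eT) continuousOn_const continuousOn_const
        (hWIcc T R hT hTR f₃ continuousOn_const)
        (hYIcc T R hT f₃)
      intro x hx
      have hV0 : 0 ≤ V x := (hVposB x (hT.trans hx.1)).le
      have h2 : (0:ℝ) ≤ (1 - 3*κ/4) * (V x * f₃ x ^ 2 * u x ^ 2) :=
        mul_nonneg (by linarith only [hκ1])
          (mul_nonneg (mul_nonneg hV0 (sq_nonneg _)) (sq_nonneg _))
      simpa using h2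
    -- piece 4 : [R, 2R]
    have hIcc4 : Icc R (2*R) ⊆ Ioi (0:ℝ) := hsubB R (2*R) hxBR
    have hf₄d : ∀ x ∈ Icc R (2*R), HasDerivAt f₄ (f₄' x) x := by
      intro x _
      rw [hf₄def, hf₄'def]
      have h := (((hasDerivAt_const x (2*R)).fun_sub (hasDerivAt_id x)).div_const R).mul_const eT
      refine h.congr_deriv ?_
      ring
    have hf₄c : ContinuousOn f₄ (Icc R (2*R)) := by
      rw [hf₄def]
      exact ((continuousOn_const.sub continuousOn_id).div_const R).mul continuousOn_const
    have hP₄ : κ/2 * ∫ x in R..(2*R), V x * f₄ x ^ 2 * u x ^ 2 ≤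
        (u' (2*R) * (f₄ (2*R) ^ 2 * u (2*R)) - u' R * (f₄ R ^ 2 * u R)) +
          ∫ x in R..(2*R), (1/κ * (f₄ x ^ 2 * w x ^ 2 / V x) + G₄ x) := by
      apply piece hκ hR0 hR2 hu hu' heq (hVc.mono hIcc4) (hu''c.mono hIcc4) hf₄d
        continuousOn_const
        (continuousOn_const.mul ((huc.mono hIcc4).pow 2))
        (hWIcc R (2*R) hxBR hR2 f₄ hf₄c)
        (hYIcc R (2*R) hxBR f₄)
      intro x hx
      have hV0 : 0 ≤ V x := (hVposB x (hxBR.trans hx.1)).le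
      have h1 : f₄' x ^ 2 * u x ^ 2 = (1/R)^2 * eT^2 * u x ^ 2 := by rw [hf₄'def]; ring
      have h2 : (0:ℝ) ≤ (1 - 3*κ/4) * (V x * f₄ x ^ 2 * u x ^ 2) :=
        mul_nonneg (by linarith only [hκ1])
          (mul_nonneg (mul_nonneg hV0 (sq_nonneg _)) (sq_nonneg _))
      change f₄' x ^ 2 * u x ^ 2 ≤ (1 - 3*κ/4)*(V x * f₄ x ^ 2 * u x ^ 2) + (1/R)^2 * eT^2 * u x ^ 2
      linarith only [h1, h2]
    -- boundary values
    have hf₁a : f₁ xA = 0 := by simp [hf₁def]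
    have hf₁b : f₁ xB = 1 := by
      simp only [hf₁def]
      rw [hΦ0, mul_zero, Real.exp_zero, ← hLdef, div_self hL.ne', mul_one]
    have hf₂b : f₂ xB = 1 := by
      simp only [hf₂def]
      rw [hΦ0, mul_zero, Real.exp_zero]
    have hf₂T : f₂ T = eT := by rw [hf₂def]
    have hf₃T : f₃ T = eT := rfl
    have hf₃R : f₃ R = eT := rfl
    have hf₄a : f₄ R = eT := by
      simp only [hf₄def]
      rw [show 2*R - R = R by ring, div_self hR0.ne', one_mul]
    have hf₄b : f₄ (2*R) = 0 := by simp [hf₄def]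
    have eb1 : u' xA * (f₁ xA ^ 2 * u xA) = 0 := by rw [hf₁a]; ring
    have eb2 : u' xB * (f₁ xB ^ 2 * u xB) = u' xB * (f₂ xB ^ 2 * u xB) := by rw [hf₁b, hf₂b]
    have eb3 : u' T * (f₂ T ^ 2 * u T) = u' T * (f₃ T ^ 2 * u T) := by rw [hf₂T, hf₃T]
    have eb4 : u' R * (f₃ R ^ 2 * u R) = u' R * (f₄ R ^ 2 * u R) := by rw [hf₃R, hf₄a]
    have eb5 : u' (2*R) * (f₄ (2*R) ^ 2 * u (2*R)) = 0 := by rw [hf₄b]; ring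
    -- nonnegativity of the energies
    have hE₁ : 0 ≤ ∫ x in xA..xB, V x * f₁ x ^ 2 * u x ^ 2 :=
      intervalIntegral.integral_nonneg hxAB.le fun x hx =>
        mul_nonneg (mul_nonneg (hVgeA x hx.1) (sq_nonneg _)) (sq_nonneg _)
    have hE₃ : 0 ≤ ∫ x in T..R, V x * f₃ x ^ 2 * u x ^ 2 :=
      intervalIntegral.integral_nonneg hTR fun x hx =>
        mul_nonneg (mul_nonneg (hVposB x (hT.trans hx.1)).le (sq_nonneg _)) (sq_nonneg _)
    have hE₄ : 0 ≤ ∫ x in R..(2*R), V x * f₄ x ^ 2 * u x ^ 2 :=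
      intervalIntegral.integral_nonneg hR2 fun x hx =>
        mul_nonneg (mul_nonneg (hVposB x (hxBR.trans hx.1)).le (sq_nonneg _)) (sq_nonneg _)
    -- bounds for the four right-hand integrals
    have hG₁c : ContinuousOn G₁ (Icc xA xB) := by
      rw [hG₁def]
      exact continuousOn_const.mul (((hexpΦc.mono hIccAB).pow 2).mul ((huc.mono hIccAB).pow 2))
    have hG₁i : IntervalIntegrable G₁ volume xA xB := by
      apply ContinuousOn.intervalIntegrable
      rwa [uIcc_of_le hxAB.le]
    have hJ₁ : (∫ x in xA..xB, (1/κ * (f₁ x ^ 2 * w x ^ 2 / V x) + G₁ x)) ≤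
        1/κ * Wm + (1 + 4/κ)/L^2 * U := by
      rw [intervalIntegral.integral_add (hW₁.const_mul (1/κ)) hG₁i]
      have hA1 : (∫ x in xA..xB, 1/κ * (f₁ x ^ 2 * w x ^ 2 / V x)) ≤ 1/κ * Wm := by
        rw [intervalIntegral.integral_const_mul]
        apply mul_le_mul_of_nonneg_left _ hκinv
        rw [intervalIntegral.integral_of_le hxAB.le, integral_Ioc_eq_integral_Ioo, hWmdef]
        apply setIntegral_mono_on hW₁Ioo hWmInt measurableSet_Ioo
        intro x hx
        have hV0 : 0 < V x := hVgtA x hx.1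
        have hle := hf₁le x ⟨hx.1.le, hx.2.le⟩
        rw [mul_div_assoc]
        linarith only [mul_nonneg (sub_nonneg.mpr hle)
          (div_nonneg (sq_nonneg (w x)) hV0.le)]
      have hexpuInt : IntegrableOn (fun x => Real.exp (γ * Φ x) ^ 2 * u x ^ 2)
          (Ioo xA xB) volume :=
        ((((hexpΦc.mono hIccAB).pow 2).mul ((huc.mono hIccAB).pow 2)).integrableOn_Icc).mono_set
          Ioo_subset_Icc_self
      have hA2 : (∫ x in xA..xB, G₁ x) ≤ (1 + 4/κ)/L^2 * U := by
        have hsplit : (∫ x in xA..xB, G₁ x)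
            = (1 + 4/κ)/L^2 * ∫ x in xA..xB, Real.exp (γ * Φ x) ^ 2 * u x ^ 2 := by
          rw [hG₁def]
          exact intervalIntegral.integral_const_mul _ _
        rw [hsplit]
        apply mul_le_mul_of_nonneg_left _ h14κ
        rw [intervalIntegral.integral_of_le hxAB.le, integral_Ioc_eq_integral_Ioo, hUdef]
        apply setIntegral_mono_on hexpuInt hUInt measurableSet_Ioo
        intro x hx
        have h1 : Real.exp (γ * Φ x) ≤ 1 := hexpΦle1 x (hIooAB hx) hx.2.le
        have he2 : Real.exp (γ * Φ x) ^ 2 ≤ 1 := by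
          nlinarith only [h1, (Real.exp_pos (γ * Φ x)).le]
        linarith only [mul_nonneg (sub_nonneg.mpr he2) (sq_nonneg (u x))]
      linarith only [hA1, hA2]
    have hJ₂ : (∫ x in xB..T, (1/κ * (f₂ x ^ 2 * w x ^ 2 / V x) + (fun _ : ℝ => (0:ℝ)) x)) ≤
        1/κ * Wo := by
      simp only [add_zero]
      rw [intervalIntegral.integral_const_mul]
      apply mul_le_mul_of_nonneg_left _ hκinv
      rw [intervalIntegral.integral_of_le hT]
      have heq2 : EqOn (fun x => f₂ x ^ 2 * w x ^ 2 / V x)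
          (fun x => Real.exp (2*γ*Φ x) * w x ^ 2 / V x) (Ioc xB T) := by
        intro x _
        simp only [hf₂def]
        rw [hexp2]
      rw [setIntegral_congr_fun measurableSet_Ioc heq2, hWodef]
      exact setIntegral_mono_set hWoInt houtnn Ioc_subset_Ioi_self.eventuallyLE
    have hJ₃ : (∫ x in T..R, (1/κ * (f₃ x ^ 2 * w x ^ 2 / V x) + (fun _ : ℝ => (0:ℝ)) x)) ≤
        1/κ * Wo := by
      simp only [add_zero]
      rw [intervalIntegral.integral_const_mul]
      apply mul_le_mul_of_nonneg_left _ hκinv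
      rw [intervalIntegral.integral_of_le hTR]
      have hsub3 : Ioc T R ⊆ Ioi xB := fun x hx => lt_of_le_of_lt hT hx.1
      have h3i : IntegrableOn (fun x => f₃ x ^ 2 * w x ^ 2 / V x) (Ioc T R) volume :=
        (intervalIntegrable_iff_integrableOn_Ioc_of_le hTR).mp
          (hWIcc T R hT hTR f₃ continuousOn_const)
      have h3i' : IntegrableOn (fun x => Real.exp (2*γ*Φ x) * w x ^ 2 / V x) (Ioc T R)
          volume := hWoInt.mono_set hsub3
      have hstep : (∫ x in Ioc T R, f₃ x ^ 2 * w x ^ 2 / V x) ≤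
          ∫ x in Ioc T R, Real.exp (2*γ*Φ x) * w x ^ 2 / V x := by
        apply setIntegral_mono_on h3i h3i' measurableSet_Ioc
        intro x hx
        have hV0 : 0 < V x := hVposB x (hT.trans hx.1.le)
        have hmΦ : Φ T ≤ Φ x := hΦmono T x hT0 hx.1.le
        have h1 : f₃ x ^ 2 = Real.exp (2*γ*Φ T) := by
          simp only [hf₃def, heTdef]
          rw [hexp2]
        have h2 : Real.exp (2*γ*Φ T) ≤ Real.exp (2*γ*Φ x) := by
          apply Real.exp_le_exp.mpr
          nlinarith only [hmΦ, hγ0]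
        rw [h1, div_le_div_iff_of_pos_right hV0]
        exact mul_le_mul_of_nonneg_right h2 (sq_nonneg _)
      have hstep2 : (∫ x in Ioc T R, Real.exp (2*γ*Φ x) * w x ^ 2 / V x) ≤ Wo := by
        rw [hWodef]
        exact setIntegral_mono_set hWoInt houtnn hsub3.eventuallyLE
      linarith only [hstep, hstep2]
    have hG₄i : IntervalIntegrable G₄ volume R (2*R) := by
      apply ContinuousOn.intervalIntegrable
      rw [uIcc_of_le hR2, hG₄def]
      exact continuousOn_const.mul ((huc.mono hIcc4).pow 2)
    have hJ₄ : (∫ x in R..(2*R), (1/κ * (f₄ x ^ 2 * w x ^ 2 / V x) + G₄ x)) ≤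
        1/κ * Wo + eT^2 * M'^2 / R := by
      rw [intervalIntegral.integral_add
        ((hWIcc R (2*R) hxBR hR2 f₄ hf₄c).const_mul (1/κ)) hG₄i]
      have hB1 : (∫ x in R..(2*R), 1/κ * (f₄ x ^ 2 * w x ^ 2 / V x)) ≤ 1/κ * Wo := by
        rw [intervalIntegral.integral_const_mul]
        apply mul_le_mul_of_nonneg_left _ hκinv
        rw [intervalIntegral.integral_of_le hR2]
        have hsub4 : Ioc R (2*R) ⊆ Ioi xB := fun x hx => lt_of_le_of_lt hxBR hx.1
        have h4i : IntegrableOn (fun x => f₄ x ^ 2 * w x ^ 2 / V x) (Ioc R (2*R)) volume :=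
          (intervalIntegrable_iff_integrableOn_Ioc_of_le hR2).mp
            (hWIcc R (2*R) hxBR hR2 f₄ hf₄c)
        have h4i' : IntegrableOn (fun x => Real.exp (2*γ*Φ x) * w x ^ 2 / V x) (Ioc R (2*R))
            volume := hWoInt.mono_set hsub4
        have hstep : (∫ x in Ioc R (2*R), f₄ x ^ 2 * w x ^ 2 / V x) ≤
            ∫ x in Ioc R (2*R), Real.exp (2*γ*Φ x) * w x ^ 2 / V x := by
          apply setIntegral_mono_on h4i h4i' measurableSet_Ioc
          intro x hx
          have hV0 : 0 < V x := hVposB x (hxBR.trans hx.1.le)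
          have hmΦ : Φ T ≤ Φ x := hΦmono T x hT0 (hTR.trans hx.1.le)
          have hs40 : 0 ≤ (2*R - x)/R := div_nonneg (by linarith only [hx.2]) hR0.le
          have hs41 : (2*R - x)/R ≤ 1 := by
            rw [div_le_one hR0]
            linarith only [hx.1]
          have hs4sq : ((2*R - x)/R)^2 ≤ 1 := by nlinarith only [hs40, hs41]
          have hf4x : f₄ x = (2*R - x)/R * Real.exp (γ * Φ T) := by rw [hf₄def, heTdef]
          have h1 : f₄ x ^ 2 ≤ Real.exp (2*γ*Φ T) := by
            rw [hf4x, ← hexp2, mul_pow]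
            linarith only [mul_nonneg (sub_nonneg.mpr hs4sq)
              (sq_nonneg (Real.exp (γ * Φ T)))]
          have h2 : Real.exp (2*γ*Φ T) ≤ Real.exp (2*γ*Φ x) := by
            apply Real.exp_le_exp.mpr
            nlinarith only [hmΦ, hγ0]
          rw [div_le_div_iff_of_pos_right hV0]
          exact mul_le_mul_of_nonneg_right (h1.trans h2) (sq_nonneg _)
        have hstep2 : (∫ x in Ioc R (2*R), Real.exp (2*γ*Φ x) * w x ^ 2 / V x) ≤ Wo := by
          rw [hWodef]
          exact setIntegral_mono_set hWoInt houtnn hsub4.eventuallyLE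
        linarith only [hstep, hstep2]
      have hB2 : (∫ x in R..(2*R), G₄ x) ≤ eT^2 * M'^2 / R := by
        have hsplit : (∫ x in R..(2*R), G₄ x)
            = (1/R)^2 * eT^2 * ∫ x in R..(2*R), u x ^ 2 := by
          rw [hG₄def]
          exact intervalIntegral.integral_const_mul _ _
        rw [hsplit]
        have huint : IntervalIntegrable (fun x => u x ^ 2) volume R (2*R) := by
          apply ContinuousOn.intervalIntegrable
          rw [uIcc_of_le hR2]
          exact (huc.mono hIcc4).pow 2
        have hu2 : (∫ x in R..(2*R), u x ^ 2) ≤ ∫ _x in R..(2*R), M' ^ 2 :=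
          intervalIntegral.integral_mono_on hR2 huint intervalIntegrable_const
            (fun x hx => hM' x (hx₀R.trans hx.1))
        rw [intervalIntegral.integral_const, smul_eq_mul] at hu2
        have hfinal := mul_le_mul_of_nonneg_left hu2
          (by positivity : (0:ℝ) ≤ (1/R)^2 * eT^2)
        have hcalc : (1/R)^2 * eT^2 * ((2*R - R) * M'^2) = eT^2 * M'^2 / R := by
          field_simp
          ring
        linarith only [hfinal, hcalc]
      linarith only [hB1, hB2]
    -- sum the four pieces
    have hsum : κ/2 * (∫ x in xB..T, V x * f₂ x ^ 2 * u x ^ 2) ≤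
        1/κ * Wm + (1 + 4/κ)/L^2 * U + 1/κ * Wo + 1/κ * Wo +
          (1/κ * Wo + eT^2 * M'^2 / R) := by
      have hn1 : 0 ≤ κ/2 * ∫ x in xA..xB, V x * f₁ x ^ 2 * u x ^ 2 :=
        mul_nonneg hκhalf hE₁
      have hn3 : 0 ≤ κ/2 * ∫ x in T..R, V x * f₃ x ^ 2 * u x ^ 2 :=
        mul_nonneg hκhalf hE₃
      have hn4 : 0 ≤ κ/2 * ∫ x in R..(2*R), V x * f₄ x ^ 2 * u x ^ 2 :=
        mul_nonneg hκhalf hE₄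
      linarith only [hP₁, hP₂, hP₃, hP₄, hJ₁, hJ₂, hJ₃, hJ₄, eb1, eb2, eb3, eb4, eb5,
        hn1, hn3, hn4]
    have hκ0 : κ ≠ 0 := hκ.ne'
    have hL0 : L ≠ 0 := hL.ne'
    have hR0' : R ≠ 0 := hR0.ne'
    have hmul := mul_le_mul_of_nonneg_left hsum h2κ
    have hid : 2/κ * (κ/2 * (∫ x in xB..T, V x * f₂ x ^ 2 * u x ^ 2))
        = ∫ x in xB..T, V x * f₂ x ^ 2 * u x ^ 2 := by
      field_simp
    rw [hid] at hmul
    have hKc : 2/κ * (1/κ * Wm + (1 + 4/κ)/L^2 * U + 1/κ * Wo + 1/κ * Wo +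
        (1/κ * Wo + eT^2 * M'^2 / R)) = K + c/R := by
      rw [hKdef, hcdef, heTdef]
      field_simp
      ring
    rw [hKc] at hmul
    linarith only [hmul, hcR]
  -- pass to the lintegral
  have hcontLHS : ContinuousOn (fun x => Real.exp (2*γ*Φ x) * V x * u x ^ 2) (Ici xB) :=
    ((Real.continuous_exp.comp_continuousOn (continuousOn_const.mul (hΦc.mono hIciB))).mul
      (hVc.mono hIciB)).mul ((huc.mono hIciB).pow 2)
  have hLHSle : (∫⁻ x in Ioi xB,
      ENNReal.ofReal (Real.exp (2 * γ * ∫ t in xB..x, Real.sqrt (V t)) * V x * u x ^ 2)) ≤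
      ENNReal.ofReal K := by
    apply lintegral_Ioi_le_of_forall
    · intro n
      apply ENNReal.measurable_ofReal.comp_aemeasurable
      exact ContinuousOn.aemeasurable
        ((hcontLHS.mono Icc_subset_Ici_self).mono Ioc_subset_Icc_self) measurableSet_Ioc
    · intro n
      have hn : xB ≤ xB + (n:ℝ) := le_add_of_nonneg_right (Nat.cast_nonneg n)
      have hInt : IntegrableOn (fun x => Real.exp (2*γ*Φ x) * V x * u x ^ 2)
          (Ioc xB (xB + (n:ℝ))) volume :=
        ((hcontLHS.mono Icc_subset_Ici_self).integrableOn_Icc).mono_set Ioc_subset_Icc_self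
      have hnn : 0 ≤ᵐ[volume.restrict (Ioc xB (xB + (n:ℝ)))]
          fun x => Real.exp (2*γ*Φ x) * V x * u x ^ 2 := by
        refine (ae_restrict_iff' measurableSet_Ioc).mpr (ae_of_all _ fun x hx => ?_)
        exact mul_nonneg (mul_nonneg (Real.exp_pos _).le (hVposB x hx.1.le).le) (sq_nonneg _)
      calc (∫⁻ x in Ioc xB (xB + (n:ℝ)), ENNReal.ofReal
            (Real.exp (2 * γ * ∫ t in xB..x, Real.sqrt (V t)) * V x * u x ^ 2))
          = ENNReal.ofReal (∫ x in Ioc xB (xB + (n:ℝ)),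
              Real.exp (2*γ*Φ x) * V x * u x ^ 2) :=
            (ofReal_integral_eq_lintegral_ofReal hInt hnn).symm
        _ ≤ ENNReal.ofReal K := by
            apply ENNReal.ofReal_le_ofReal
            have heqi : EqOn (fun x => Real.exp (2*γ*Φ x) * V x * u x ^ 2)
                (fun x => V x * f₂ x ^ 2 * u x ^ 2) (Ioc xB (xB + (n:ℝ))) := by
              intro x _
              simp only [hf₂def]
              rw [hexp2]
              ring
            rw [setIntegral_congr_fun measurableSet_Ioc heqi,
              ← intervalIntegral.integral_of_le hn]
            exact hmain _ hn
  -- identify the right-hand side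
  have hunn : 0 ≤ᵐ[volume.restrict (Ioo xA xB)] fun x => u x ^ 2 :=
    ae_of_all _ fun x => sq_nonneg _
  have hLouteq : Lout = ENNReal.ofReal Wo := by
    rw [hLoutdef, hWodef, ofReal_integral_eq_lintegral_ofReal hWoInt houtnn]
  have hLmideq : Lmid = ENNReal.ofReal Wm := by
    rw [hLmiddef, hWmdef, ofReal_integral_eq_lintegral_ofReal hWmInt hmidnn]
  have hLueq : Lu = ENNReal.ofReal U := by
    rw [hLudef, hUdef, ofReal_integral_eq_lintegral_ofReal hUInt hunn]
  have hvol : volume (Ioo xA xB) = ENNReal.ofReal L := by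
    rw [Real.volume_Ioo, ← hLdef]
  refine le_trans hLHSle ?_
  rw [hLouteq, hLmideq, hLueq, hvol, ← ENNReal.ofReal_pow hL.le,
    ← ENNReal.ofReal_inv_of_pos (by positivity : (0:ℝ) < L^2),
    ← ENNReal.ofReal_mul (inv_nonneg.mpr (sq_nonneg L)),
    ← ENNReal.ofReal_add hWo0 hWm0,
    ← ENNReal.ofReal_add (add_nonneg hWo0 hWm0)
      (mul_nonneg (inv_nonneg.mpr (sq_nonneg L)) hU0),
    ← ENNReal.ofReal_mul hCκ.le]
  apply ENNReal.ofReal_le_ofReal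
  rw [hKdef]
  have hκne : κ ≠ 0 := hκ.ne'
  have hLne : L ≠ 0 := hL.ne'
  have key : 10/κ^2*(Wo + Wm + (L^2)⁻¹*U) -
      (2/κ^2 * Wm + 6/κ^2 * Wo + 2/κ * ((1 + 4/κ)/L^2) * U) =
      4/κ^2*Wo + 8/κ^2*Wm + ((2/κ^2 - 2/κ)*(L^2)⁻¹)*U := by
    field_simp
    ring
  have h5 : (0:ℝ) ≤ 2/κ^2 - 2/κ := by
    rw [sub_nonneg, div_le_div_iff₀ hκ (by positivity : (0:ℝ) < κ^2)]
    nlinarith only [hκ, hκ1]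
  have t1 : (0:ℝ) ≤ 4/κ^2*Wo := mul_nonneg (by positivity) hWo0
  have t2 : (0:ℝ) ≤ 8/κ^2*Wm := mul_nonneg (by positivity) hWm0
  have t3 : (0:ℝ) ≤ ((2/κ^2 - 2/κ)*(L^2)⁻¹)*U :=
    mul_nonneg (mul_nonneg h5 (inv_nonneg.mpr (sq_nonneg L))) hU0
  linarith only [key, t1, t2, t3]
end
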